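/- arXiv:0708.4409 — 2 statements merged into one kernel-verified Lean document; each statement's English description precedes it below -/
import Mathlib

section
/- Let t be an infinite word with Alph(t) = A, and suppose there exist an infinite sequence (t^(i))_{i≥0} of non-recurrent infinite words and letters x_1, x_2, x_3, … in A such that t^(0) = t and, for every i ≥ 1, t'^(i−1) = ψ_{x_i}(t^(i)), where t'^(i−1) = t^(i−1) if t^(i−1) begins with x_i and t'^(i−1) = x_i·t^(i−1) otherwise. Then there exist a letter x ∈ A, a standard episturmian word s over A \ {x}, a pure epistandard morphism μ on A, a natural number p, and a non-empty suffix v of μ(s̃_p x) such that t = v·μ(s). -/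
/-- The prefix of length `k` of an infinite word `t`. -/
def prefixList {A : Type*} (t : ℕ → A) (k : ℕ) : List A := (List.range k).map t

/-- `u` occurs as a factor of the infinite word `t` at position `i`. -/
def FactorAt {A : Type*} (t : ℕ → A) (u : List A) (i : ℕ) : Prop :=
  u = (List.range u.length).map (fun j => t (i + j))

/-- `u` is a (finite) factor of the infinite word `t`. -/
def IsFactorInf {A : Type*} (t : ℕ → A) (u : List A) : Prop := ∃ i, FactorAt t u i

/-- An infinite word is recurrent if each of its factors occurs infinitely often. -/
def Recurrent {A : Type*} (t : ℕ → A) : Prop :=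
  ∀ u, IsFactorInf t u → ∀ N, ∃ i, N ≤ i ∧ FactorAt t u i

/-- `u` is a right special factor of `t`. -/
def RightSpecial {A : Type*} (t : ℕ → A) (u : List A) : Prop :=
  ∃ a b : A, a ≠ b ∧ IsFactorInf t (u ++ [a]) ∧ IsFactorInf t (u ++ [b])

/-- `u` is a left special factor of `t`. -/
def LeftSpecial {A : Type*} (t : ℕ → A) (u : List A) : Prop :=
  ∃ a b : A, a ≠ b ∧ IsFactorInf t (a :: u) ∧ IsFactorInf t (b :: u)

/-- An infinite word is episturmian if its set of factors is closed under reversal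
and it has at most one right special factor of each length. -/
def Episturmian {A : Type*} (t : ℕ → A) : Prop :=
  (∀ u, IsFactorInf t u → IsFactorInf t u.reverse) ∧
  (∀ u v, RightSpecial t u → RightSpecial t v → u.length = v.length → u = v)

/-- A standard episturmian word: episturmian with all left special factors prefixes. -/
def StdEpisturmian {A : Type*} (t : ℕ → A) : Prop :=
  Episturmian t ∧ ∀ u, LeftSpecial t u → u = prefixList t u.length

/-- A finite word is finite episturmian if it is a factor of some episturmian infinite word. -/
def FiniteEpisturmian {A : Type*} (w : List A) : Prop :=
  ∃ t : ℕ → A, Episturmian t ∧ IsFactorInf t w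

/-- An acceptable pair: a strict total order `r` on `A` together with a letter `a`
that is minimal for `r`. -/
def AcceptablePair {A : Type*} (r : A → A → Prop) (a : A) : Prop :=
  IsStrictTotalOrder A r ∧ ∀ b, b ≠ a → r a b

/-- Non-strict lexicographic order on finite words induced by the order `r` on letters. -/
def listLe {A : Type*} (r : A → A → Prop) (u v : List A) : Prop := u = v ∨ List.Lex r u v

/-- Non-strict lexicographic order on infinite words induced by the order `r` on letters. -/
def infLe {A : Type*} (r : A → A → Prop) (x y : ℕ → A) : Prop :=
  x = y ∨ ∃ i, (∀ j, j < i → x j = y j) ∧ r (x i) (y i)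

/-- `m` is the lexicographically smallest factor of the finite word `w` of length `k`. -/
def IsMinFacLen {A : Type*} (r : A → A → Prop) (w : List A) (k : ℕ) (m : List A) : Prop :=
  m <:+: w ∧ m.length = k ∧ ∀ u, u <:+: w → u.length = k → listLe r m u

/-- `m` is the lexicographically greatest factor of the finite word `w` of length `k`. -/
def IsMaxFacLen {A : Type*} (r : A → A → Prop) (w : List A) (k : ℕ) (m : List A) : Prop :=
  m <:+: w ∧ m.length = k ∧ ∀ u, u <:+: w → u.length = k → listLe r u m

/-- `m = min(w)`: for each `j ≤ |m|` the prefix of `m` of length `j` is `min(w|j)`,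
and `|m|` is maximal with this chain property. -/
def IsMinFin {A : Type*} (r : A → A → Prop) (w m : List A) : Prop :=
  m ≠ [] ∧
  (∀ j, j ≤ m.length → IsMinFacLen r w j (m.take j)) ∧
  (∀ m', IsMinFacLen r w (m.length + 1) m' → ¬ m <+: m')

/-- `m = max(w)` (finite word version). -/
def IsMaxFin {A : Type*} (r : A → A → Prop) (w m : List A) : Prop :=
  m ≠ [] ∧
  (∀ j, j ≤ m.length → IsMaxFacLen r w j (m.take j)) ∧
  (∀ m', IsMaxFacLen r w (m.length + 1) m' → ¬ m <+: m')

/-- `m = min(t)` for an infinite word `t`: each prefix of `m` is the lexicographically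
smallest factor of `t` of its length. -/
def IsMinInf {A : Type*} (r : A → A → Prop) (t m : ℕ → A) : Prop :=
  ∀ k, IsFactorInf t (prefixList m k) ∧
    ∀ u, IsFactorInf t u → u.length = k → listLe r (prefixList m k) u

/-- `m = max(t)` for an infinite word `t`. -/
def IsMaxInf {A : Type*} (r : A → A → Prop) (t m : ℕ → A) : Prop :=
  ∀ k, IsFactorInf t (prefixList m k) ∧
    ∀ u, IsFactorInf t u → u.length = k → listLe r u (prefixList m k)

/-- Prepend a letter to an infinite word. -/
def consInf {A : Type*} (a : A) (t : ℕ → A) : ℕ → A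
  | 0 => a
  | n + 1 => t n

/-- Prepend a finite word to an infinite word. -/
def wordAppend {A : Type*} (v : List A) (t : ℕ → A) : ℕ → A :=
  fun n => if h : n < v.length then v.get ⟨n, h⟩ else t (n - v.length)

/-- The pure epistandard morphism `ψ_z` on finite words: it fixes `z` and sends
each letter `x ≠ z` to `zx`. -/
def psiW {A : Type*} [DecidableEq A] (z : A) (w : List A) : List A :=
  (w.map (fun x => if x = z then [z] else [z, x])).flatten

/-- The finite word `u` is a prefix of the infinite word `t`. -/
def IsPrefixInf {A : Type*} (u : List A) (t : ℕ → A) : Prop := u = prefixList t u.length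

/-- `y = f(t)`: the infinite word `y` is the image of the infinite word `t` under the
(non-erasing) morphism `f`, acting letter by letter. -/
def IsMorphImage {A : Type*} (f : List A → List A) (t y : ℕ → A) : Prop :=
  ∀ k, IsPrefixInf (f (prefixList t k)) y

/-- Pure epistandard morphisms: finite compositions of the morphisms `ψ_a`. -/
inductive PureEpistandard {A : Type*} [DecidableEq A] : (List A → List A) → Prop
  | id : PureEpistandard _root_.id
  | comp (a : A) (f : List A → List A) : PureEpistandard f →
      PureEpistandard (fun w => psiW a (f w))

/-- An infinite word is episkew if it is non-recurrent and all of its factors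
are finite episturmian. -/
def Episkew {A : Type*} (t : ℕ → A) : Prop :=
  ¬ Recurrent t ∧ ∀ u, IsFactorInf t u → FiniteEpisturmian u

/- Two-letter (Bool) notions: `false` plays the role of `a`, `true` of `b`,
with the order `false < true`. -/

/-- A finite binary word is balanced. -/
def BalancedList (w : List Bool) : Prop :=
  ∀ u v : List Bool, u <:+: w → v <:+: w → u.length = v.length →
    |(u.count true : ℤ) - (v.count true : ℤ)| ≤ 1

/-- An infinite binary word is balanced. -/
def BalancedInf (t : ℕ → Bool) : Prop :=
  ∀ u v : List Bool, IsFactorInf t u → IsFactorInf t v → u.length = v.length →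
    |(u.count true : ℤ) - (v.count true : ℤ)| ≤ 1

/-- The Sturmian word of slope `α` and intercept `ρ` defined via floors. -/
def SturmianFloor (α ρ : ℝ) (t : ℕ → Bool) : Prop :=
  ∀ n : ℕ, t n = true ↔ ⌊((n : ℝ) + 1) * α + ρ⌋ ≠ ⌊(n : ℝ) * α + ρ⌋

/-- The Sturmian word of slope `α` and intercept `ρ` defined via ceilings. -/
def SturmianCeil (α ρ : ℝ) (t : ℕ → Bool) : Prop :=
  ∀ n : ℕ, t n = true ↔ ⌈((n : ℝ) + 1) * α + ρ⌉ ≠ ⌈(n : ℝ) * α + ρ⌉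

/-- Aperiodic Sturmian words: those of irrational slope. -/
def IsAperiodicSturmian (t : ℕ → Bool) : Prop :=
  ∃ α ρ : ℝ, α ∈ Set.Icc (0 : ℝ) 1 ∧ ρ ∈ Set.Icc (0 : ℝ) 1 ∧ Irrational α ∧
    (SturmianFloor α ρ t ∨ SturmianCeil α ρ t)

/-- Standard Sturmian words: those with `ρ = α`. -/
def IsStandardSturmian (t : ℕ → Bool) : Prop :=
  ∃ α : ℝ, α ∈ Set.Icc (0 : ℝ) 1 ∧ (SturmianFloor α α t ∨ SturmianCeil α α t)

/-- A fine infinite binary word: `(min(t), max(t)) = (a·s, b·s)` for some infinite word `s`. -/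
def FineBool (t : ℕ → Bool) : Prop :=
  ∃ s : ℕ → Bool, IsMinInf (· < ·) t (consInf false s) ∧ IsMaxInf (· < ·) t (consInf true s)

/-- A periodic infinite word. -/
def PeriodicInf {A : Type*} (t : ℕ → A) : Prop := ∃ p, 0 < p ∧ ∀ i, t (i + p) = t i

/-- An ultimately periodic infinite word. -/
def UltPeriodicInf {A : Type*} (t : ℕ → A) : Prop :=
  ∃ p, 0 < p ∧ ∃ m, ∀ i, m ≤ i → t (i + p) = t i

/-!
Write `z i = x (i + 1)` and `μ_j = ψ_{z 0} ∘ ⋯ ∘ ψ_{z (j-1)}`. By induction on `j`, `t` is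
`μ_j(t⁽ʲ⁾)` with a proper prefix of the image of the first letter of `t⁽ʲ⁾` deleted; what is left
of that image, the head block, never gets shorter and gets longer whenever the first letter
changes. Since `t` is not recurrent, some prefix of `t` occurs in `t` only at `0`. If the head block
is ever that long, the first letter of `t⁽ʲ⁾` occurs only once in `t⁽ʲ⁾`; then `t⁽ʲ⁾` cannot be a
`ψ`-image, so it does not begin with `x_{j+1}`, and this persists. Otherwise the head block stays
shorter, so the first letter changes finitely often. Either way it is eventually a constant `f`.

From then on the tails `w_k` of `t⁽ᴺ⁺ᵏ⁾` satisfy `w_k = ψ_{z (N+k)}(w_{k+1})`, and such a word `w_0`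
is standard episturmian: its palindromic prefixes `ψ(Q) z` make its factors closed under reversal,
and a left special factor desubstitutes to a shorter left special factor of `w_1`. If `f` occurs
infinitely often among the `z (N+k)`, long palindromic prefixes `Q` with `Q f` a factor show that
`t⁽ᴺ⁾ = f w_0` is recurrent. Otherwise `f` eventually never occurs among them, hence not in `w_0`,
and `t = v μ_N(w_0)` with `v` the head block, a nonempty suffix of `μ_N(f)`.
-/

section Basics
variable {A : Type*}

theorem prefixList_length (t : ℕ → A) (k : ℕ) : (prefixList t k).length = k := by
  simp [prefixList]

theorem prefixList_zero (t : ℕ → A) : prefixList t 0 = [] := rfl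

theorem prefixList_getElem (t : ℕ → A) {k i : ℕ} (h : i < (prefixList t k).length) :
    (prefixList t k)[i] = t i := by
  simp [prefixList]

theorem prefixList_succ (t : ℕ → A) (k : ℕ) :
    prefixList t (k+1) = prefixList t k ++ [t k] := by
  simp [prefixList, List.range_succ]

theorem prefixList_take (t : ℕ → A) {k l : ℕ} (h : k ≤ l) :
    (prefixList t l).take k = prefixList t k := by
  apply List.ext_getElem
  · simp [prefixList_length]; omega
  · intro i h1 h2
    simp only [List.getElem_take, prefixList_getElem]

theorem prefixList_prefix (t : ℕ → A) {k l : ℕ} (h : k ≤ l) :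
    prefixList t k <+: prefixList t l := by
  rw [← prefixList_take t h]; exact List.take_prefix _ _

theorem factorAt_iff {t : ℕ → A} {u : List A} {i : ℕ} :
    FactorAt t u i ↔ ∀ j (h : j < u.length), u[j] = t (i + j) := by
  constructor
  · intro h j hj
    have : u[j] = ((List.range u.length).map (fun j => t (i + j)))[j]'(by simpa using hj) :=
      List.getElem_of_eq h hj
    simpa using this
  · intro h
    apply List.ext_getElem (by simp)
    intro j h1 h2
    simp only [List.getElem_map, List.getElem_range]
    exact h j h1

theorem factorAt_nil (t : ℕ → A) (i : ℕ) : FactorAt t [] i := rfl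

theorem factorAt_prefixList (t : ℕ → A) (k : ℕ) : FactorAt t (prefixList t k) 0 := by
  rw [factorAt_iff]
  intro j hj
  simp [prefixList_getElem]

theorem prefixList_add (t : ℕ → A) (i k : ℕ) :
    prefixList t (i + k) = prefixList t i ++ (List.range k).map (fun j => t (i + j)) := by
  simp [prefixList, List.range_add, Function.comp]

theorem factorAt_iff_prefixList {t : ℕ → A} {u : List A} {i : ℕ} :
    FactorAt t u i ↔ prefixList t (i + u.length) = prefixList t i ++ u := by
  rw [prefixList_add, FactorAt]
  constructor
  · intro h; rw [← h]
  · intro h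
    exact (List.append_cancel_left h).symm

theorem factorAt_append {t : ℕ → A} {u v : List A} {i : ℕ} :
    FactorAt t (u ++ v) i ↔ FactorAt t u i ∧ FactorAt t v (i + u.length) := by
  simp only [factorAt_iff]
  constructor
  · intro h
    refine ⟨fun j hj => ?_, fun j hj => ?_⟩
    · have := h j (by simp; omega)
      rwa [List.getElem_append_left hj] at this
    · have := h (u.length + j) (by simp; omega)
      rw [List.getElem_append_right (by omega)] at this
      simpa [Nat.add_assoc] using this
  · intro ⟨h1, h2⟩ j hj
    rcases Nat.lt_or_ge j u.length with hj' | hj'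
    · rw [List.getElem_append_left hj']; exact h1 j hj'
    · rw [List.getElem_append_right hj']
      have := h2 (j - u.length) (by simp at hj; omega)
      rw [this]; congr 1; omega

theorem factorAt_infix {t : ℕ → A} {p u s : List A} {i : ℕ}
    (h : FactorAt t (p ++ u ++ s) i) : FactorAt t u (i + p.length) :=
  ((factorAt_append.1 ((factorAt_append (u := p ++ u)).1 h).1).2)

theorem isFactorInf_infix {t : ℕ → A} {u v : List A} (h : u <:+: v)
    (hv : IsFactorInf t v) : IsFactorInf t u := by
  obtain ⟨i, hi⟩ := hv
  obtain ⟨p, s, rfl⟩ := h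
  exact ⟨i + p.length, factorAt_infix hi⟩

theorem factorAt_prefix {t : ℕ → A} {u v : List A} {i : ℕ} (h : u <+: v)
    (hv : FactorAt t v i) : FactorAt t u i := by
  obtain ⟨s, rfl⟩ := h
  exact (factorAt_append.1 hv).1

theorem isPrefixInf_iff_factorAt {u : List A} {t : ℕ → A} :
    IsPrefixInf u t ↔ FactorAt t u 0 := by
  simp [IsPrefixInf, FactorAt, prefixList]

theorem isPrefixInf_prefixList (t : ℕ → A) (k : ℕ) : IsPrefixInf (prefixList t k) t := by
  rw [isPrefixInf_iff_factorAt]; exact factorAt_prefixList t k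

theorem isPrefixInf_prefix {u v : List A} {t : ℕ → A} (h : u <+: v) (hv : IsPrefixInf v t) :
    IsPrefixInf u t := by
  rw [isPrefixInf_iff_factorAt] at *
  exact factorAt_prefix h hv

theorem isPrefixInf_getElem {u : List A} {t : ℕ → A} (h : IsPrefixInf u t) {j : ℕ}
    (hj : j < u.length) : u[j] = t j := by
  rw [isPrefixInf_iff_factorAt] at h
  simpa using factorAt_iff.1 h j hj

theorem isPrefixInf_prefix_of_le {u v : List A} {t : ℕ → A} (hu : IsPrefixInf u t)
    (hv : IsPrefixInf v t) (h : u.length ≤ v.length) : u <+: v := by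
  rw [hu, hv]; exact prefixList_prefix t h

theorem factorAt_infix_prefixList {t : ℕ → A} {u : List A} {i : ℕ} (h : FactorAt t u i) :
    u <:+: prefixList t (i + u.length) := by
  rw [factorAt_iff_prefixList.1 h]
  exact ⟨prefixList t i, [], by simp⟩

theorem isFactorInf_of_infix_prefixList {t : ℕ → A} {u : List A} {k : ℕ}
    (h : u <:+: prefixList t k) : IsFactorInf t u := by
  obtain ⟨p, s, hps⟩ := h
  have := factorAt_infix (t := t) (i := 0) (p := p) (u := u) (s := s)
    (by rw [hps]; exact factorAt_prefixList t k)
  exact ⟨0 + p.length, this⟩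

theorem isFactorInf_of_isPrefixInf {t : ℕ → A} {u : List A} (h : IsPrefixInf u t) :
    IsFactorInf t u := ⟨0, isPrefixInf_iff_factorAt.1 h⟩

theorem consInf_zero (c : A) (v : ℕ → A) : consInf c v 0 = c := rfl

theorem consInf_succ (c : A) (v : ℕ → A) (n : ℕ) : consInf c v (n+1) = v n := rfl

theorem consInf_shift (v : ℕ → A) : consInf (v 0) (fun n => v (n+1)) = v := by
  funext n; cases n <;> rfl

theorem prefixList_consInf (c : A) (v : ℕ → A) (k : ℕ) :
    prefixList (consInf c v) (k+1) = c :: prefixList v k := by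
  apply List.ext_getElem (by simp [prefixList_length])
  intro i h1 h2
  cases i with
  | zero => simp [prefixList_getElem]; rfl
  | succ j =>
    rw [prefixList_getElem]
    simp only [List.getElem_cons_succ, prefixList_getElem]
    rfl

theorem factorAt_consInf_succ {c : A} {v : ℕ → A} {u : List A} {i : ℕ} :
    FactorAt (consInf c v) u (i+1) ↔ FactorAt v u i := by
  simp only [factorAt_iff]
  constructor <;> intro h j hj
  · have := h j hj
    rwa [show i + 1 + j = (i + j) + 1 by omega, consInf_succ] at this
  · rw [show i + 1 + j = (i + j) + 1 by omega, consInf_succ]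
    exact h j hj

theorem wordAppend_lt {d : List A} {v : ℕ → A} {n : ℕ} (h : n < d.length) :
    wordAppend d v n = d[n] := by
  simp [wordAppend, h]

theorem wordAppend_ge {d : List A} {v : ℕ → A} {n : ℕ} (h : d.length ≤ n) :
    wordAppend d v n = v (n - d.length) := by
  simp [wordAppend, Nat.not_lt.2 h]

theorem wordAppend_add (d : List A) (v : ℕ → A) (n : ℕ) :
    wordAppend d v (d.length + n) = v n := by
  rw [wordAppend_ge (by omega)]
  congr 1; omega

theorem wordAppend_nil (v : ℕ → A) : wordAppend [] v = v := by
  funext n; simp [wordAppend]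

theorem wordAppend_append (d e : List A) (v : ℕ → A) :
    wordAppend (d ++ e) v = wordAppend d (wordAppend e v) := by
  funext n
  rcases Nat.lt_or_ge n d.length with h | h
  · rw [wordAppend_lt (by simp; omega), wordAppend_lt h, List.getElem_append_left h]
  · rcases Nat.lt_or_ge n (d.length + e.length) with h2 | h2
    · rw [wordAppend_lt (by simp; omega), wordAppend_ge h, wordAppend_lt (by omega),
        List.getElem_append_right h]
    · rw [wordAppend_ge (by simp; omega), wordAppend_ge h, wordAppend_ge (by omega)]
      congr 1; simp; omega

theorem consInf_eq_wordAppend (c : A) (v : ℕ → A) : consInf c v = wordAppend [c] v := by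
  funext n
  cases n with
  | zero => rw [consInf_zero, wordAppend_lt (by simp)]; rfl
  | succ m => rw [consInf_succ, wordAppend_ge (by simp)]; rfl

theorem wordAppend_cancel {d : List A} {a b : ℕ → A} (h : wordAppend d a = wordAppend d b) :
    a = b := by
  funext n
  have := congrFun h (d.length + n)
  rwa [wordAppend_add, wordAppend_add] at this

theorem factorAt_wordAppend {d : List A} {v : ℕ → A} {u : List A} {i : ℕ} :
    FactorAt (wordAppend d v) u (d.length + i) ↔ FactorAt v u i := by
  simp only [factorAt_iff]
  constructor <;> intro h j hj
  · have := h j hj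
    rwa [show d.length + i + j = d.length + (i + j) by omega, wordAppend_add] at this
  · rw [show d.length + i + j = d.length + (i + j) by omega, wordAppend_add]
    exact h j hj

theorem isPrefixInf_wordAppend_iff {d e : List A} {v : ℕ → A} :
    IsPrefixInf (d ++ e) (wordAppend d v) ↔ IsPrefixInf e v := by
  simp only [isPrefixInf_iff_factorAt]
  rw [factorAt_append]
  constructor
  · intro ⟨_, h2⟩
    rw [show (0:ℕ) + d.length = d.length + 0 by omega, factorAt_wordAppend] at h2
    exact h2
  · intro h
    constructor
    · rw [factorAt_iff]
      intro j hj
      rw [show (0:ℕ) + j = j by omega, wordAppend_lt hj]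
    · rw [show (0:ℕ) + d.length = d.length + 0 by omega, factorAt_wordAppend]
      exact h

theorem wordAppend_prefixList (t : ℕ → A) (k : ℕ) :
    wordAppend (prefixList t k) (fun n => t (k + n)) = t := by
  funext n
  rcases Nat.lt_or_ge n k with h | h
  · rw [wordAppend_lt (by rwa [prefixList_length]), prefixList_getElem]
  · rw [wordAppend_ge (by rwa [prefixList_length]), prefixList_length]
    congr 1
    omega

theorem factorAt_cons {t : ℕ → A} {a : A} {u : List A} {m : ℕ} :
    FactorAt t (a :: u) m ↔ t m = a ∧ FactorAt t u (m+1) := by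
  rw [show a :: u = [a] ++ u from rfl, factorAt_append]
  constructor
  · intro ⟨h1, h2⟩
    refine ⟨?_, by simpa using h2⟩
    have := factorAt_iff.1 h1 0 (by simp)
    simpa using this.symm
  · intro ⟨h1, h2⟩
    refine ⟨?_, by simpa using h2⟩
    rw [factorAt_iff]
    intro j hj
    obtain rfl : j = 0 := by simpa using hj
    simpa using h1.symm

theorem isPrefixInf_of_prefix_prefixList {u : List A} {t : ℕ → A} {n : ℕ}
    (h : u <+: prefixList t n) : IsPrefixInf u t := by
  have hle : u.length ≤ n := by
    have := h.length_le
    rwa [prefixList_length] at this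
  have e := List.prefix_iff_eq_take.1 h
  rw [prefixList_take t hle] at e
  exact e

theorem leftSpecial_reverse_of_rightSpecial {t : ℕ → A}
    (hrev : ∀ u, IsFactorInf t u → IsFactorInf t u.reverse) {u : List A}
    (h : RightSpecial t u) : LeftSpecial t u.reverse := by
  obtain ⟨a, b, hab, ha, hb⟩ := h
  exact ⟨a, b, hab, by simpa using hrev _ ha, by simpa using hrev _ hb⟩

theorem isPrefixInf_wordAppend (d : List A) (v : ℕ → A) : IsPrefixInf d (wordAppend d v) := by
  simpa using (isPrefixInf_wordAppend_iff (d := d) (e := []) (v := v)).2 rfl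

end Basics

section PsiW
variable {A : Type*} [DecidableEq A] {z : A}

theorem psiW_nil (z : A) : psiW z [] = [] := rfl

theorem psiW_cons (z c : A) (w : List A) :
    psiW z (c :: w) = (if c = z then [z] else [z, c]) ++ psiW z w := by
  simp [psiW]

theorem psiW_singleton (z c : A) : psiW z [c] = if c = z then [z] else [z, c] := by
  simp [psiW]

theorem psiW_append (z : A) (u v : List A) : psiW z (u ++ v) = psiW z u ++ psiW z v := by
  simp [psiW]

theorem length_le_length_psiW (z : A) (w : List A) : w.length ≤ (psiW z w).length := by
  induction w with
  | nil => simp [psiW]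
  | cons c w ih =>
    rw [psiW_cons]
    split <;> simp <;> omega

theorem psiW_ne_nil (z : A) {w : List A} (h : w ≠ []) : psiW z w ≠ [] := by
  cases w with
  | nil => exact absurd rfl h
  | cons c w =>
    rw [psiW_cons]
    split <;> simp

theorem exists_psiW_cons_eq_cons (z c : A) (w : List A) :
    ∃ r, psiW z (c :: w) = z :: r := by
  rw [psiW_cons]
  split <;> exact ⟨_, rfl⟩

theorem psiW_getElem_zero (z : A) {w : List A} (h : w ≠ []) (hl : 0 < (psiW z w).length) :
    (psiW z w)[0] = z := by
  cases w with
  | nil => exact absurd rfl h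
  | cons c w =>
    obtain ⟨r, hr⟩ := exists_psiW_cons_eq_cons z c w
    simp [hr]

theorem psiW_injective (z : A) : ∀ {v w : List A}, psiW z v = psiW z w → v = w := by
  intro v
  induction v with
  | nil =>
    intro w h
    cases w with
    | nil => rfl
    | cons d w => exact absurd h.symm (psiW_ne_nil z (List.cons_ne_nil d w))
  | cons c v ih =>
    intro w h
    cases w with
    | nil => exact absurd h (psiW_ne_nil z (List.cons_ne_nil c v))
    | cons d w =>
      rw [psiW_cons, psiW_cons] at h
      by_cases hc : c = z <;> by_cases hd : d = z <;> simp [hc, hd] at h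
      · rw [hc, hd, ih h]
      · exfalso
        cases v with
        | nil => simp [psiW_nil] at h
        | cons e v' =>
          obtain ⟨r, hr⟩ := exists_psiW_cons_eq_cons z e v'
          rw [hr] at h
          exact hd (List.cons.inj h).1.symm
      · exfalso
        cases w with
        | nil => simp [psiW_nil] at h
        | cons e w' =>
          obtain ⟨r, hr⟩ := exists_psiW_cons_eq_cons z e w'
          rw [hr] at h
          exact hc (List.cons.inj h).1
      · obtain ⟨h1, h2⟩ := h
        rw [h1, ih h2]

theorem psiW_replicate (z : A) (k : ℕ) :
    psiW z (List.replicate k z) = List.replicate k z := by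
  induction k with
  | zero => rfl
  | succ n ih =>
    rw [List.replicate_succ, psiW_cons, if_pos rfl, ih]
    rfl

theorem eq_replicate_of_length_psiW_eq {z : A} : ∀ {w : List A},
    (psiW z w).length = w.length → w = List.replicate w.length z := by
  intro w
  induction w with
  | nil => intro _; rfl
  | cons c w ih =>
    intro h
    rw [psiW_cons] at h
    by_cases hc : c = z
    · rw [if_pos hc] at h
      simp only [List.singleton_append, List.length_cons] at h
      have := ih (by omega)
      rw [List.length_cons, List.replicate_succ, hc, ← this]
    · exfalso
      rw [if_neg hc] at h
      have := length_le_length_psiW z w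
      simp only [List.cons_append, List.nil_append, List.length_cons] at h
      omega

theorem psiW_reverse (z : A) (w : List A) :
    z :: (psiW z w).reverse = psiW z w.reverse ++ [z] := by
  induction w with
  | nil => rfl
  | cons c w ih =>
    rw [psiW_cons, List.reverse_append, List.reverse_cons, psiW_append]
    have hblock : [z] ++ (if c = z then [z] else [z, c]).reverse
        = psiW z [c] ++ [z] := by
      rw [psiW_singleton]
      split <;> rfl
    calc z :: ((psiW z w).reverse ++ (if c = z then [z] else [z, c]).reverse)
        = (z :: (psiW z w).reverse) ++ (if c = z then [z] else [z, c]).reverse := rfl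
      _ = (psiW z w.reverse ++ [z]) ++ (if c = z then [z] else [z, c]).reverse := by rw [ih]
      _ = psiW z w.reverse ++ ([z] ++ (if c = z then [z] else [z, c]).reverse) := by
          rw [List.append_assoc]
      _ = psiW z w.reverse ++ (psiW z [c] ++ [z]) := by rw [hblock]
      _ = psiW z w.reverse ++ psiW z [c] ++ [z] := by rw [List.append_assoc]

theorem psiW_palindrome {z : A} {w : List A} (h : w.reverse = w) :
    (psiW z w ++ [z]).reverse = psiW z w ++ [z] := by
  rw [List.reverse_append, List.reverse_singleton, List.singleton_append, psiW_reverse, h]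

theorem getLast?_psiW (z : A) : ∀ {w : List A}, w ≠ [] → (psiW z w).getLast? = w.getLast? := by
  intro w
  induction w with
  | nil => intro h; exact absurd rfl h
  | cons c w ih =>
    intro _
    rw [psiW_cons]
    by_cases hw : w = []
    · subst hw
      rw [psiW_nil, List.append_nil]
      split <;> simp_all
    · obtain ⟨d, w', rfl⟩ := List.exists_cons_of_ne_nil hw
      rw [List.getLast?_append, ih (by simp), List.getLast?_cons_cons]
      have hs : ((d :: w').getLast?).isSome := by
        rw [List.getLast?_isSome]
        simp
      exact Option.or_of_isSome hs

def PsiDecodes (z : A) (w u : List A) : Prop := u = psiW z w ∨ u = psiW z w ++ [z]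

theorem PsiDecodes.exists_common {wa wb u : List A} (ha : PsiDecodes z wa u)
    (hb : PsiDecodes z wb u) : ∃ w, w <+: wa ∧ w <+: wb ∧ PsiDecodes z w u := by
  have psiW_snoc : ∀ w : List A, psiW z (w ++ [z]) = psiW z w ++ [z] := fun w => by
    rw [psiW_append, psiW_singleton, if_pos rfl]
  rcases ha with ha | ha <;> rcases hb with hb | hb
  · obtain rfl := psiW_injective z (ha.symm.trans hb)
    exact ⟨wa, List.prefix_rfl, List.prefix_rfl, Or.inl ha⟩
  · obtain rfl : wa = wb ++ [z] := psiW_injective z (by rw [← ha, hb, psiW_snoc])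
    exact ⟨wb, List.prefix_append _ _, List.prefix_rfl, Or.inr hb⟩
  · obtain rfl : wb = wa ++ [z] := psiW_injective z (by rw [← hb, ha, psiW_snoc])
    exact ⟨wa, List.prefix_rfl, List.prefix_append _ _, Or.inr ha⟩
  · obtain rfl := psiW_injective z (List.append_cancel_right (ha.symm.trans hb))
    exact ⟨wa, List.prefix_rfl, List.prefix_rfl, Or.inr ha⟩

theorem PsiDecodes.exists_shorter {w u : List A} (h : PsiDecodes z w u) (hu : u ≠ []) :
    ∃ w', w' <+: w ∧ w'.length < u.length ∧ PsiDecodes z w' u := by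
  rcases h with rfl | rfl
  · rcases (length_le_length_psiW z w).lt_or_eq with hlt | heq
    · exact ⟨w, List.prefix_rfl, hlt, Or.inl rfl⟩
    -- `ψ_z` preserves only the length of powers of `z`, and `z^(n+1) = ψ_z(z^n) z`
    have hw0 : w.length ≠ 0 := by rw [heq]; exact (List.length_pos_iff.2 hu).ne'
    obtain ⟨n, hn⟩ := Nat.exists_eq_succ_of_ne_zero hw0
    have hw : w = List.replicate n z ++ [z] := by
      rw [eq_replicate_of_length_psiW_eq heq.symm, hn, List.replicate_succ']
    refine ⟨List.replicate n z, ?_, ?_, Or.inr ?_⟩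
    · rw [hw]; exact List.prefix_append _ _
    · rw [← heq, hn]; simp
    · rw [hw, psiW_append, psiW_replicate, psiW_singleton, if_pos rfl]
  · exact ⟨w, List.prefix_rfl, by simpa using Nat.lt_succ_of_le (length_le_length_psiW z w),
      Or.inr rfl⟩

theorem exists_psiDecodes_of_prefix_psiW {W u : List A} (hu : u ≠ []) (h : u <+: psiW z W) :
    ∃ w, w <+: W ∧ PsiDecodes z w u := by
  induction W generalizing u with
  | nil => exact absurd (List.prefix_nil.1 h) hu
  | cons c W ih =>
    rw [show c :: W = [c] ++ W from rfl, psiW_append] at h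
    rcases List.prefix_or_prefix_of_prefix h (List.prefix_append _ _) with hB | ⟨u', rfl⟩
    · -- `u` is a nonempty prefix of the block `ψ_z(c)`, so it is `z` or that block
      have hc : [c] <+: c :: W := List.cons_prefix_cons.2 ⟨rfl, List.nil_prefix⟩
      rw [psiW_singleton] at hB
      split_ifs at hB with hcz
      · rcases List.prefix_cons_iff.1 hB with rfl | ⟨t, rfl, ht⟩
        · exact absurd rfl hu
        obtain rfl := List.prefix_nil.1 ht
        exact ⟨[c], hc, Or.inl (by rw [psiW_singleton, if_pos hcz])⟩
      · rcases List.prefix_cons_iff.1 hB with rfl | ⟨t, rfl, ht⟩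
        · exact absurd rfl hu
        rcases List.prefix_cons_iff.1 ht with rfl | ⟨t', rfl, ht'⟩
        · exact ⟨[], List.nil_prefix, Or.inr rfl⟩
        obtain rfl := List.prefix_nil.1 ht'
        exact ⟨[c], hc, Or.inl (by rw [psiW_singleton, if_neg hcz])⟩
    · rcases eq_or_ne u' [] with rfl | hu'
      · exact ⟨[c], List.cons_prefix_cons.2 ⟨rfl, List.nil_prefix⟩, Or.inl (List.append_nil _)⟩
      obtain ⟨w, hw, hwu⟩ := ih hu' ((List.prefix_append_right_inj _).1 h)
      refine ⟨c :: w, List.cons_prefix_cons.2 ⟨rfl, hw⟩, ?_⟩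
      rw [PsiDecodes, show c :: w = [c] ++ w from rfl, psiW_append, List.append_assoc]
      rcases hwu with rfl | rfl
      · exact Or.inl rfl
      · exact Or.inr rfl

theorem exists_append_of_psiW_eq_append_cons (z : A) : ∀ (W p u : List A), psiW z W = p ++ z :: u →
    ∃ W1 W2, W = W1 ++ W2 ∧ psiW z W1 = p ∧ psiW z W2 = z :: u := by
  intro W
  induction W with
  | nil =>
    intro p u h
    rw [psiW_nil] at h
    exact absurd h.symm (by simp)
  | cons c W ih =>
    intro p u h
    rw [psiW_cons] at h
    cases p with
    | nil => exact ⟨[], c :: W, rfl, rfl, by rw [psiW_cons]; simpa using h⟩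
    | cons a p' =>
      by_cases hc : c = z
      · rw [if_pos hc, List.singleton_append, List.cons_append] at h
        injection h with ha h2
        obtain ⟨W1, W2, hW, hW1, hW2⟩ := ih p' u h2
        refine ⟨c :: W1, W2, by rw [hW]; rfl, ?_, hW2⟩
        rw [psiW_cons, if_pos hc, hW1, List.singleton_append, ha]
      · rw [if_neg hc, List.cons_append, List.cons_append] at h
        injection h with ha h2
        simp only [List.append_eq, List.nil_append] at h2
        cases p' with
        | nil =>
          injection h2 with hb h3
          exact absurd hb hc
        | cons b p'' =>
          injection h2 with hb h3
          obtain ⟨W1, W2, hW, hW1, hW2⟩ := ih p'' u h3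
          refine ⟨c :: W1, W2, by rw [hW]; rfl, ?_, hW2⟩
          rw [psiW_cons, if_neg hc, hW1, ha, hb]
          rfl

theorem psiW_prefix_of_prefix (z : A) {u w : List A} (h : u <+: w) :
    psiW z u <+: psiW z w := by
  obtain ⟨s, rfl⟩ := h
  rw [psiW_append]
  exact ⟨psiW z s, rfl⟩

theorem getElem_succ_psiW_eq_of_ne (z : A) : ∀ (W : List A) (n : ℕ) (h1 : n < (psiW z W).length)
    (h2 : n + 1 < (psiW z W).length),
    (psiW z W)[n] ≠ z → (psiW z W)[n+1] = z := by
  intro W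
  induction W with
  | nil => intro n h1 h2 h; simp [psiW_nil] at h1
  | cons c W ih =>
    intro n h1 h2 h
    by_cases hc : c = z
    · simp only [psiW_cons, if_pos hc, List.singleton_append] at h1 h2 h ⊢
      cases n with
      | zero => simp at h
      | succ m =>
        simp only [List.getElem_cons_succ] at h ⊢
        exact ih m (by simpa using h1) (by simpa using h2) h
    · simp only [psiW_cons, if_neg hc, List.cons_append, List.nil_append] at h1 h2 h ⊢
      cases n with
      | zero => simp at h
      | succ m =>
        simp only [List.getElem_cons_succ] at h ⊢
        cases m with
        | zero =>
          have hW : W ≠ [] := by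
            intro e
            subst e
            simp [psiW_nil] at h2
          exact psiW_getElem_zero z hW (by simpa using h2)
        | succ m' =>
          simp only [List.getElem_cons_succ] at h ⊢
          exact ih m' (by simpa using h1) (by simpa using h2) h

theorem exists_getElem_eq_of_getElem_psiW_ne (z : A) :
    ∀ (W : List A) (n : ℕ) (h : n < (psiW z W).length),
    (psiW z W)[n] ≠ z → ∃ m, m < n ∧ ∃ hm : m < W.length, W[m] = (psiW z W)[n] := by
  intro W
  induction W with
  | nil => intro n h1 h; simp [psiW_nil] at h1
  | cons c W ih =>
    intro n h1 h
    by_cases hc : c = z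
    · simp only [psiW_cons, if_pos hc, List.singleton_append] at h1 h ⊢
      cases n with
      | zero => simp at h
      | succ m =>
        simp only [List.getElem_cons_succ] at h ⊢
        obtain ⟨m', hlt, hm', he⟩ := ih m (by simpa using h1) h
        exact ⟨m' + 1, by omega, by simpa using hm', by simpa using he⟩
    · simp only [psiW_cons, if_neg hc, List.cons_append, List.nil_append] at h1 h ⊢
      cases n with
      | zero => simp at h
      | succ m =>
        simp only [List.getElem_cons_succ] at h ⊢
        cases m with
        | zero => exact ⟨0, by omega, by simp, by simp⟩
        | succ m' =>
          simp only [List.getElem_cons_succ] at h ⊢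
          obtain ⟨m'', hlt, hm'', he⟩ := ih m' (by simpa using h1) h
          exact ⟨m'' + 1, by omega, by simpa using hm'', by simpa using he⟩

end PsiW

/-- `ψ_z(v)`: its `n`-th letter already occurs in the image of the prefix of length `n + 1`. -/
def psiInf {A : Type*} [DecidableEq A] (z : A) (v : ℕ → A) : ℕ → A :=
  fun n => (psiW z (prefixList v (n+1))).getD n z

section PsiInf
variable {A : Type*} [DecidableEq A] {z : A} {v : ℕ → A}

theorem le_length_psiW_prefixList (z : A) (v : ℕ → A) (k : ℕ) :
    k ≤ (psiW z (prefixList v k)).length := by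
  have := length_le_length_psiW z (prefixList v k)
  rwa [prefixList_length] at this

theorem psiW_prefixList_prefix (z : A) (v : ℕ → A) {k l : ℕ} (h : k ≤ l) :
    psiW z (prefixList v k) <+: psiW z (prefixList v l) :=
  psiW_prefix_of_prefix z (prefixList_prefix v h)

theorem isPrefixInf_psiW_psiInf (z : A) (v : ℕ → A) (k : ℕ) :
    IsPrefixInf (psiW z (prefixList v k)) (psiInf z v) := by
  rw [IsPrefixInf]
  apply List.ext_getElem (by rw [prefixList_length])
  intro n h1 h2
  rw [prefixList_getElem]
  show _ = (psiW z (prefixList v (n+1))).getD n z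
  rcases Nat.le_total k (n+1) with h | h
  · have hpre := psiW_prefixList_prefix z v h
    rw [List.getD_eq_getElem _ _ (Nat.lt_of_lt_of_le h1 hpre.length_le)]
    exact hpre.getElem h1
  · have hpre := psiW_prefixList_prefix z v h
    have hn : n < (psiW z (prefixList v (n+1))).length :=
      Nat.lt_of_lt_of_le (Nat.lt_succ_self n) (le_length_psiW_prefixList z v (n+1))
    rw [List.getD_eq_getElem _ _ hn]
    exact (hpre.getElem hn).symm

theorem eq_psiInf_of_isMorphImage {y : ℕ → A} (h : IsMorphImage (psiW z) v y) :
    y = psiInf z v := by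
  funext n
  have h1 := h (n+1)
  have h2 := isPrefixInf_psiW_psiInf z v (n+1)
  have hn : n < (psiW z (prefixList v (n+1))).length := le_length_psiW_prefixList z v (n+1)
  have e1 := isPrefixInf_getElem h1 hn
  have e2 := isPrefixInf_getElem h2 hn
  rw [← e1, e2]

theorem psiInf_consInf (z c : A) (v : ℕ → A) :
    psiInf z (consInf c v) = wordAppend (psiW z [c]) (psiInf z v) := by
  symm
  apply eq_psiInf_of_isMorphImage
  intro k
  cases k with
  | zero => exact rfl
  | succ m =>
    rw [prefixList_consInf, show (c :: prefixList v m) = [c] ++ prefixList v m from rfl,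
      psiW_append]
    rw [isPrefixInf_wordAppend_iff]
    exact isPrefixInf_psiW_psiInf z v m

theorem psiInf_zero (z : A) (v : ℕ → A) : psiInf z v 0 = z := by
  have h := isPrefixInf_psiW_psiInf z v 1
  have hl : 0 < (psiW z (prefixList v 1)).length := le_length_psiW_prefixList z v 1
  have := isPrefixInf_getElem h hl
  rw [← this]
  exact psiW_getElem_zero z (by rw [← List.length_pos_iff_ne_nil, prefixList_length]; omega) hl

theorem psiInf_eq_wordAppend (z : A) (v : ℕ → A) :
    psiInf z v = wordAppend (psiW z [v 0]) (psiInf z (fun n => v (n+1))) := by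
  conv_lhs => rw [← consInf_shift v]
  exact psiInf_consInf z (v 0) _

theorem psiInf_one (z : A) (v : ℕ → A) : psiInf z v 1 = if v 0 = z then z else v 0 := by
  rw [psiInf_eq_wordAppend]
  by_cases h : v 0 = z
  · rw [if_pos h, psiW_singleton, if_pos h]
    have h1 : (1:ℕ) = [z].length + 0 := by simp
    rw [h1, wordAppend_add]
    exact psiInf_zero z _
  · rw [if_neg h, psiW_singleton, if_neg h]
    rw [wordAppend_lt (by simp)]
    rfl

theorem factorAt_psiInf_psiW {w : List A} {m : ℕ} (h : FactorAt v w m) :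
    FactorAt (psiInf z v) (psiW z w) ((psiW z (prefixList v m)).length) ∧
      m ≤ (psiW z (prefixList v m)).length := by
  refine ⟨?_, le_length_psiW_prefixList z v m⟩
  have halign := factorAt_iff_prefixList.1 h
  rw [factorAt_iff_prefixList]
  have h1 := isPrefixInf_psiW_psiInf z v (m + w.length)
  have h2 := isPrefixInf_psiW_psiInf z v m
  rw [halign, psiW_append] at h1
  rw [← List.length_append, ← h1, ← h2]

theorem isFactorInf_psiInf_psiW {w : List A} (h : IsFactorInf v w) :
    IsFactorInf (psiInf z v) (psiW z w) := by
  obtain ⟨m, hm⟩ := h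
  exact ⟨_, (factorAt_psiInf_psiW hm).1⟩

theorem isPrefixInf_psiW_append_psiInf (z : A) (v : ℕ → A) (m : ℕ) :
    IsPrefixInf (psiW z (prefixList v m) ++ [z]) (psiInf z v) := by
  apply isPrefixInf_prefix _ (isPrefixInf_psiW_psiInf z v (m+1))
  rw [prefixList_succ, psiW_append]
  obtain ⟨r, hr⟩ : ∃ r, psiW z [v m] = z :: r := by
    rw [psiW_singleton]; split <;> exact ⟨_, rfl⟩
  exact ⟨r, by rw [List.append_assoc, hr]; rfl⟩

theorem getElem_psiW_prefixList (z : A) (v : ℕ → A) {k n : ℕ}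
    (hn : n < (psiW z (prefixList v k)).length) :
    (psiW z (prefixList v k))[n] = psiInf z v n :=
  isPrefixInf_getElem (isPrefixInf_psiW_psiInf z v k) hn

theorem psiInf_succ_eq_of_ne {n : ℕ} (h : psiInf z v n ≠ z) : psiInf z v (n+1) = z := by
  have hl1 : n < (psiW z (prefixList v (n+2))).length := by
    have := le_length_psiW_prefixList z v (n+2); omega
  have hl2 : n + 1 < (psiW z (prefixList v (n+2))).length := by
    have := le_length_psiW_prefixList z v (n+2); omega
  rw [← getElem_psiW_prefixList z v hl2]
  apply getElem_succ_psiW_eq_of_ne z _ n hl1 hl2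
  rw [getElem_psiW_prefixList z v hl1]
  exact h

theorem exists_lt_eq_of_psiInf_eq {n : ℕ} {c : A} (h : psiInf z v n = c) (hc : c ≠ z) :
    ∃ m, m < n ∧ v m = c := by
  have hl : n < (psiW z (prefixList v (n+1))).length := le_length_psiW_prefixList z v (n+1)
  obtain ⟨m, hlt, hm, he⟩ := exists_getElem_eq_of_getElem_psiW_ne z (prefixList v (n+1)) n hl
    (by rw [getElem_psiW_prefixList z v hl, h]; exact hc)
  refine ⟨m, hlt, ?_⟩
  rw [prefixList_getElem] at he
  rw [he, getElem_psiW_prefixList z v hl, h]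

theorem exists_psiInf_eq_of_eq {m : ℕ} {c : A} (h : v m = c) (hc : c ≠ z) :
    ∃ m', m + 1 ≤ m' ∧ psiInf z v m' = c := by
  have hf : FactorAt v [c] m := by
    rw [factorAt_cons]
    exact ⟨h, factorAt_nil _ _⟩
  obtain ⟨hfa, hle⟩ := factorAt_psiInf_psiW (z := z) hf
  rw [psiW_singleton, if_neg hc, factorAt_cons, factorAt_cons] at hfa
  exact ⟨_ + 1, by omega, hfa.2.1⟩

theorem psiInf_wordAppend (z0 : A) (d : List A) (v : ℕ → A) :
    psiInf z0 (wordAppend d v) = wordAppend (psiW z0 d) (psiInf z0 v) := by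
  induction d generalizing v with
  | nil => rw [wordAppend_nil, psiW_nil, wordAppend_nil]
  | cons c d ih =>
    have h1 : wordAppend (c :: d) v = consInf c (wordAppend d v) := by
      rw [consInf_eq_wordAppend, ← wordAppend_append]
      rfl
    rw [h1, psiInf_consInf, ih, ← wordAppend_append, ← psiW_append]
    rfl

theorem exists_psiW_prefixList_eq {i : ℕ} (h : psiInf z v (i + 1) = z) :
    ∃ k, psiW z (prefixList v k) = prefixList (psiInf z v) (i + 1) := by
  set P := psiW z (prefixList v (i + 2))
  have hP : P = prefixList (psiInf z v) P.length := isPrefixInf_psiW_psiInf z v (i + 2)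
  have hlen : i + 2 ≤ P.length := le_length_psiW_prefixList z v (i + 2)
  have htake : P.take (i + 1) = prefixList (psiInf z v) (i + 1) := by
    rw [hP, prefixList_take _ (by omega)]
  have hz : P[i + 1] = z := by rw [getElem_psiW_prefixList z v, h]
  have hsplit : P = prefixList (psiInf z v) (i + 1) ++ z :: P.drop (i + 2) := by
    rw [← htake, ← hz, ← List.drop_eq_getElem_cons, List.take_append_drop]
  obtain ⟨W1, W2, hW, hW1, -⟩ := exists_append_of_psiW_eq_append_cons z _ _ _ hsplit
  exact ⟨W1.length, by rw [← isPrefixInf_of_prefix_prefixList ⟨W2, hW.symm⟩, hW1]⟩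

theorem exists_psiDecodes_of_isPrefixInf_psiInf {w : List A} (hw : w ≠ [])
    (h : IsPrefixInf w (psiInf z v)) :
    ∃ vv, PsiDecodes z vv w ∧ IsPrefixInf vv v := by
  have hpre : w <+: psiW z (prefixList v w.length) :=
    isPrefixInf_prefix_of_le h (isPrefixInf_psiW_psiInf z v _) (le_length_psiW_prefixList z v _)
  obtain ⟨vv, hvv, hform⟩ := exists_psiDecodes_of_prefix_psiW hw hpre
  exact ⟨vv, hform, isPrefixInf_of_prefix_prefixList hvv⟩

/-- An occurrence of `z` at a positive position of `ψ_z(v)` starts a block, and the letter before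
it ends the preceding block. -/
theorem exists_psiDecodes_of_factorAt_psiInf {w' : List A} {i : ℕ}
    (h : FactorAt (psiInf z v) (z :: w') (i + 1)) :
    ∃ vv m, PsiDecodes z vv (z :: w') ∧ FactorAt v (psiInf z v i :: vv) m := by
  obtain ⟨k, hk⟩ := exists_psiW_prefixList_eq (factorAt_cons.1 h).1
  have hlen : (psiW z (prefixList v k)).length = i + 1 := by rw [hk, prefixList_length]
  obtain ⟨k, rfl⟩ : ∃ k', k = k' + 1 := Nat.exists_eq_succ_of_ne_zero (by
    rintro rfl; simp [prefixList_zero, psiW_nil] at hlen)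
  have hpre : IsPrefixInf (z :: w') (psiInf z (fun n => v (k + 1 + n))) := by
    rw [isPrefixInf_iff_factorAt, ← factorAt_wordAppend (d := psiW z (prefixList v (k + 1))),
      ← psiInf_wordAppend, wordAppend_prefixList, hlen]
    exact h
  obtain ⟨vv, hvv, hvvpre⟩ := exists_psiDecodes_of_isPrefixInf_psiInf (List.cons_ne_nil _ _) hpre
  have hlast : some (v k) = some (psiInf z v i) := by
    have := getLast?_psiW z (w := prefixList v (k + 1)) (by simp [prefixList_succ])
    rwa [hk, prefixList_succ, prefixList_succ, List.getLast?_append_of_ne_nil _ (by simp),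
      List.getLast?_append_of_ne_nil _ (by simp), List.getLast?_singleton,
      List.getLast?_singleton, eq_comm] at this
  refine ⟨vv, k, hvv, factorAt_cons.2 ⟨Option.some_injective _ hlast, ?_⟩⟩
  rw [factorAt_iff]
  exact fun j hj => isPrefixInf_getElem hvvpre hj

end PsiInf

theorem eventually_not_of_bounded {g : ℕ → ℕ} {P : ℕ → Prop} {C : ℕ} (hbound : ∀ j, g j < C)
    (hmono : ∀ j, g j ≤ g (j + 1)) (hlt : ∀ j, P j → g j < g (j + 1)) :
    ∃ N, ∀ j, N ≤ j → ¬ P j := by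
  by_contra! hP
  have hunbounded : ∀ c, ∃ j, c ≤ g j := by
    intro c
    induction c with
    | zero => exact ⟨0, Nat.zero_le _⟩
    | succ c ih =>
      obtain ⟨j, hj⟩ := ih
      obtain ⟨k, hjk, hk⟩ := hP j
      exact ⟨k + 1, by have := monotone_nat_of_le_succ hmono hjk; have := hlt k hk; omega⟩
  obtain ⟨j, hj⟩ := hunbounded C
  exact absurd (hbound j) (not_lt.2 hj)

section Recur
variable {A : Type*}

theorem recurrent_of_prefixList_factorAt {t : ℕ → A}
    (h : ∀ p, ∃ m, 1 ≤ m ∧ FactorAt t (prefixList t p) m) : Recurrent t := by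
  have hocc : ∀ p N, ∃ m, N ≤ m ∧ FactorAt t (prefixList t p) m := by
    intro p N
    induction N with
    | zero => exact ⟨0, le_refl 0, factorAt_prefixList t p⟩
    | succ N ih =>
      obtain ⟨m, hm, hf⟩ := ih
      obtain ⟨m', hm', hf'⟩ := h (m + p)
      have hsplit : prefixList t (m + p) = prefixList t m ++ prefixList t p := by
        rw [prefixList_add]
        congr 1
        have := hf.symm
        rwa [prefixList_length] at this
      rw [hsplit] at hf'
      have key := (factorAt_append.1 hf').2
      rw [prefixList_length] at key
      exact ⟨m' + m, by omega, key⟩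
  intro u hu N
  obtain ⟨i, hi⟩ := hu
  obtain ⟨m, hm, hf⟩ := hocc (i + u.length) N
  have hsplit : prefixList t (i + u.length) = prefixList t i ++ u :=
    factorAt_iff_prefixList.1 hi
  rw [hsplit] at hf
  have key := (factorAt_append.1 hf).2
  rw [prefixList_length] at key
  exact ⟨m + i, by omega, key⟩

theorem exists_prefixList_factorAt_eq_zero {t : ℕ → A} (h : ¬ Recurrent t) :
    ∃ p, ∀ m, FactorAt t (prefixList t p) m → m = 0 := by
  contrapose! h
  exact recurrent_of_prefixList_factorAt fun p =>
    (h p).imp fun _ ⟨hm, hne⟩ => ⟨Nat.one_le_iff_ne_zero.2 hne, hm⟩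

end Recur

section Chain
variable {A : Type*} [DecidableEq A]

def IsPsiChain (V : ℕ → ℕ → A) (ξ : ℕ → A) : Prop := ∀ i, V i = psiInf (ξ i) (V (i + 1))

namespace IsPsiChain
variable {V : ℕ → ℕ → A} {ξ : ℕ → A}

theorem exists_psiDecodes (hV : IsPsiChain V ξ) {i j : ℕ} {u' : List A}
    (h : FactorAt (V i) (ξ i :: u') (j + 1)) :
    ∃ w m, PsiDecodes (ξ i) w (ξ i :: u') ∧ FactorAt (V (i + 1)) (V i j :: w) m := by
  rw [hV i] at h ⊢
  exact exists_psiDecodes_of_factorAt_psiInf h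

theorem isPrefixInf_of_psiDecodes (hV : IsPsiChain V ξ) {i : ℕ} {w u : List A}
    (hwu : PsiDecodes (ξ i) w u) (hw : IsPrefixInf w (V (i + 1))) : IsPrefixInf u (V i) := by
  rw [hV i]
  rcases hwu with rfl | rfl
  · rw [hw]; exact isPrefixInf_psiW_psiInf _ _ _
  · rw [hw]; exact isPrefixInf_psiW_append_psiInf _ _ _

theorem isFactorInf_psiW (hV : IsPsiChain V ξ) {i : ℕ} {u : List A}
    (h : IsFactorInf (V (i + 1)) u) : IsFactorInf (V i) (psiW (ξ i) u) := by
  rw [hV i]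
  exact isFactorInf_psiInf_psiW h

theorem exists_palindrome_prefix (hV : IsPsiChain V ξ) (n i : ℕ) :
    ∃ Q : List A, Q.reverse = Q ∧ IsPrefixInf Q (V i) ∧ n ≤ Q.length := by
  induction n generalizing i with
  | zero => exact ⟨[], rfl, rfl, le_rfl⟩
  | succ n ih =>
    obtain ⟨Q, hpal, hpre, hlen⟩ := ih (i + 1)
    refine ⟨psiW (ξ i) Q ++ [ξ i], psiW_palindrome hpal,
      hV.isPrefixInf_of_psiDecodes (Or.inr rfl) hpre, ?_⟩
    have := length_le_length_psiW (ξ i) Q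
    simp only [List.length_append, List.length_cons, List.length_nil]
    omega

theorem reverse_isFactorInf (hV : IsPsiChain V ξ) (i : ℕ) {u : List A}
    (hu : IsFactorInf (V i) u) : IsFactorInf (V i) u.reverse := by
  obtain ⟨m, hm⟩ := hu
  obtain ⟨Q, hpal, hpre, hlen⟩ := hV.exists_palindrome_prefix (m + u.length) i
  have h1 : u <:+: prefixList (V i) (m + u.length) := factorAt_infix_prefixList hm
  have h2 : prefixList (V i) (m + u.length) <+: Q :=
    isPrefixInf_prefix_of_le (isPrefixInf_prefixList _ _) hpre (by rw [prefixList_length]; omega)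
  have h3 : u.reverse <:+: Q := by
    rw [← hpal]
    exact List.reverse_infix.2 (h1.trans h2.isInfix)
  apply isFactorInf_of_infix_prefixList (k := Q.length)
  rwa [← hpre]

theorem exists_leftSpecial_succ (hV : IsPsiChain V ξ) {i : ℕ} {u : List A} (hu : u ≠ [])
    (h : LeftSpecial (V i) u) :
    ∃ w, w.length < u.length ∧ PsiDecodes (ξ i) w u ∧ LeftSpecial (V (i + 1)) w := by
  obtain ⟨a, b, hab, ⟨ja, hja⟩, ⟨jb, hjb⟩⟩ := h
  wlog haz : a ≠ ξ i generalizing a b ja jb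
  · exact this b a (Ne.symm hab) jb hjb ja hja (fun hb => hab (by rw [not_not.1 haz, hb]))
  obtain ⟨c, u', rfl⟩ := List.exists_cons_of_ne_nil hu
  rw [factorAt_cons] at hja hjb
  obtain rfl : c = ξ i := by
    rw [← (factorAt_cons.1 hja.2).1, hV i]
    exact psiInf_succ_eq_of_ne (by rw [← hV i, hja.1]; exact haz)
  obtain ⟨wa, ma, hwa, hfa⟩ := hV.exists_psiDecodes hja.2
  obtain ⟨wb, mb, hwb, hfb⟩ := hV.exists_psiDecodes hjb.2
  obtain ⟨w, hpa, hpb, hw⟩ := hwa.exists_common hwb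
  obtain ⟨w', hw'w, hlen, hw'⟩ := hw.exists_shorter hu
  rw [hja.1] at hfa
  rw [hjb.1] at hfb
  exact ⟨w', hlen, hw', a, b, hab,
    ⟨ma, factorAt_prefix (List.cons_prefix_cons.2 ⟨rfl, hw'w.trans hpa⟩) hfa⟩,
    ⟨mb, factorAt_prefix (List.cons_prefix_cons.2 ⟨rfl, hw'w.trans hpb⟩) hfb⟩⟩

theorem isPrefixInf_of_leftSpecial (hV : IsPsiChain V ξ) {i : ℕ} {u : List A}
    (h : LeftSpecial (V i) u) : IsPrefixInf u (V i) := by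
  induction hn : u.length using Nat.strong_induction_on generalizing i u with
  | _ n ih =>
    rcases eq_or_ne u [] with rfl | hu
    · rfl
    obtain ⟨w, hlen, hw, hls⟩ := hV.exists_leftSpecial_succ hu h
    exact hV.isPrefixInf_of_psiDecodes hw (ih _ (hn ▸ hlen) hls rfl)

theorem stdEpisturmian (hV : IsPsiChain V ξ) : StdEpisturmian (V 0) := by
  have hrev : ∀ u, IsFactorInf (V 0) u → IsFactorInf (V 0) u.reverse :=
    fun _ => hV.reverse_isFactorInf 0
  refine ⟨⟨hrev, fun u u' hu hu' hlen => ?_⟩, fun u hu => hV.isPrefixInf_of_leftSpecial hu⟩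
  have e := hV.isPrefixInf_of_leftSpecial (leftSpecial_reverse_of_rightSpecial hrev hu)
  have e' := hV.isPrefixInf_of_leftSpecial (leftSpecial_reverse_of_rightSpecial hrev hu')
  rw [IsPrefixInf, List.length_reverse] at e e'
  rw [← List.reverse_inj, e, e', hlen]

theorem isFactorInf_singleton (hV : IsPsiChain V ξ) {f : A} {i k : ℕ} (hik : i ≤ k)
    (hk : ξ k = f) : IsFactorInf (V i) [f] := by
  obtain ⟨d, rfl⟩ := Nat.exists_eq_add_of_le hik
  induction d generalizing i with
  | zero => exact ⟨0, factorAt_cons.2 ⟨by rw [hV i, psiInf_zero]; exact hk, factorAt_nil _ _⟩⟩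
  | succ d ih =>
    have hup := hV.isFactorInf_psiW (ih (i := i + 1) (by omega) (by rw [← hk]; congr 1; omega))
    refine isFactorInf_infix ?_ hup
    rw [psiW_singleton]
    split_ifs with he
    · rw [he]
    · exact ⟨[ξ i], [], rfl⟩

theorem exists_palindrome_prefix_snoc (hV : IsPsiChain V ξ) {f : A}
    (hf : ∀ j, ∃ k, j ≤ k ∧ ξ k = f) (n i : ℕ) :
    ∃ Q : List A, Q.reverse = Q ∧ IsPrefixInf Q (V i) ∧ n ≤ Q.length ∧
      IsFactorInf (V i) (Q ++ [f]) := by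
  induction n generalizing i with
  | zero =>
    obtain ⟨k, hk, hkf⟩ := hf i
    exact ⟨[], rfl, rfl, le_rfl, hV.isFactorInf_singleton hk hkf⟩
  | succ n ih =>
    obtain ⟨Q, hpal, hpre, hlen, m, hm⟩ := ih (i + 1)
    refine ⟨psiW (ξ i) Q ++ [ξ i], psiW_palindrome hpal,
      hV.isPrefixInf_of_psiDecodes (Or.inr rfl) hpre, ?_, ?_⟩
    · have := length_le_length_psiW (ξ i) Q
      simp only [List.length_append, List.length_cons, List.length_nil]
      omega
    -- `ψ(Q f) ξ` is a factor of `V i`, and it contains `ψ(Q) ξ f`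
    have hbig := hV.isPrefixInf_of_psiDecodes (Or.inr rfl)
      (isPrefixInf_prefixList (V (i + 1)) (m + (Q ++ [f]).length))
    rw [factorAt_iff_prefixList.1 hm, psiW_append, psiW_append] at hbig
    refine isFactorInf_infix ?_ (isFactorInf_of_isPrefixInf hbig)
    rw [psiW_singleton]
    split_ifs with hfz
    · exact ⟨psiW (ξ i) (prefixList (V (i + 1)) m), [], by simp [hfz]⟩
    · exact ⟨psiW (ξ i) (prefixList (V (i + 1)) m), [ξ i], by simp⟩

theorem recurrent_consInf (hV : IsPsiChain V ξ) {f : A} (hf : ∀ j, ∃ k, j ≤ k ∧ ξ k = f) :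
    Recurrent (consInf f (V 0)) := by
  refine recurrent_of_prefixList_factorAt fun p => ?_
  cases p with
  | zero => exact ⟨1, le_rfl, factorAt_nil _ 1⟩
  | succ q =>
    -- `f Q` is the reversal of the factor `Q f`, for a long palindromic prefix `Q`
    obtain ⟨Q, hpal, hpre, hlen, hfac⟩ := hV.exists_palindrome_prefix_snoc hf q 0
    obtain ⟨m, hm⟩ : IsFactorInf (V 0) (f :: Q) := by
      simpa [hpal] using hV.reverse_isFactorInf 0 hfac
    have hqQ : prefixList (V 0) q <+: Q :=
      isPrefixInf_prefix_of_le (isPrefixInf_prefixList _ _) hpre (by rwa [prefixList_length])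
    refine ⟨m + 1, by omega, ?_⟩
    rw [prefixList_consInf, factorAt_consInf_succ]
    exact factorAt_prefix (List.cons_prefix_cons.2 ⟨rfl, hqQ⟩) hm

theorem ne_of_forall_ne (hV : IsPsiChain V ξ) {f : A} (hf : ∀ k, ξ k ≠ f) (k n : ℕ) :
    V k n ≠ f := by
  induction n using Nat.strong_induction_on generalizing k with
  | _ n ih =>
    intro he
    rw [hV k] at he
    obtain ⟨m, hmn, hm⟩ := exists_lt_eq_of_psiInf_eq he (fun e => hf k e.symm)
    exact ih m hmn (k + 1) hm

end IsPsiChain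

end Chain

section Mu
variable {A : Type*} [DecidableEq A]

/-- `MuW z i = ψ_{z 0} ∘ ψ_{z 1} ∘ ⋯ ∘ ψ_{z (i-1)}`. -/
def MuW (z : ℕ → A) : ℕ → List A → List A
  | 0 => id
  | (i+1) => fun w => MuW z i (psiW (z i) w)

def MuInf (z : ℕ → A) : ℕ → (ℕ → A) → (ℕ → A)
  | 0 => id
  | (i+1) => fun v => MuInf z i (psiInf (z i) v)

theorem MuW_append (z : ℕ → A) (i : ℕ) (u v : List A) :
    MuW z i (u ++ v) = MuW z i u ++ MuW z i v := by
  induction i generalizing u v with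
  | zero => rfl
  | succ i ih =>
    show MuW z i (psiW (z i) (u ++ v)) = _
    rw [psiW_append, ih]
    rfl

theorem length_le_length_MuW (z : ℕ → A) (i : ℕ) (w : List A) :
    w.length ≤ (MuW z i w).length := by
  induction i generalizing w with
  | zero => exact le_refl _
  | succ i ih =>
    calc w.length ≤ (psiW (z i) w).length := length_le_length_psiW _ _
      _ ≤ (MuW z i (psiW (z i) w)).length := ih _

theorem pureEpistandard_comp_psiW {f : List A → List A} (a : A) (h : PureEpistandard f) :
    PureEpistandard (fun w => f (psiW a w)) := by
  induction h with
  | id => exact PureEpistandard.comp a _root_.id PureEpistandard.id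
  | comp b g hg ih => exact PureEpistandard.comp b _ ih

theorem pureEpistandard_MuW (z : ℕ → A) (i : ℕ) : PureEpistandard (MuW z i) := by
  induction i with
  | zero => exact PureEpistandard.id
  | succ i ih => exact pureEpistandard_comp_psiW (z i) ih

theorem isMorphImage_MuInf (z : ℕ → A) (i : ℕ) (v : ℕ → A) :
    IsMorphImage (MuW z i) v (MuInf z i v) := by
  induction i generalizing v with
  | zero => exact fun k => isPrefixInf_prefixList v k
  | succ i ih =>
    intro k
    show IsPrefixInf (MuW z i (psiW (z i) (prefixList v k))) (MuInf z i (psiInf (z i) v))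
    rw [isPrefixInf_psiW_psiInf (z i) v k]
    exact ih (psiInf (z i) v) _

theorem MuInf_wordAppend (z : ℕ → A) (i : ℕ) (d : List A) (v : ℕ → A) :
    MuInf z i (wordAppend d v) = wordAppend (MuW z i d) (MuInf z i v) := by
  induction i generalizing d v with
  | zero => rfl
  | succ i ih =>
    show MuInf z i (psiInf (z i) (wordAppend d v)) = _
    rw [psiInf_wordAppend, ih]
    rfl

theorem MuInf_consInf (z : ℕ → A) (i : ℕ) (c : A) (v : ℕ → A) :
    MuInf z i (consInf c v) = wordAppend (MuW z i [c]) (MuInf z i v) := by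
  rw [consInf_eq_wordAppend, MuInf_wordAppend]

theorem MuInf_isFactorInf (z : ℕ → A) (i : ℕ) {v : ℕ → A} {w : List A} (h : IsFactorInf v w) :
    IsFactorInf (MuInf z i v) (MuW z i w) := by
  induction i generalizing v w with
  | zero => exact h
  | succ i ih => exact ih (isFactorInf_psiInf_psiW h)

end Mu

section Desubstitution
variable {A : Type*} [DecidableEq A]

/-- The word `t'` of the statement, for `t` and the letter `a`. -/
def primeWord (a : A) (t : ℕ → A) : ℕ → A := if t 0 = a then t else consInf a t

def IsDesubstitution (ts : ℕ → ℕ → A) (z : ℕ → A) : Prop :=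
  ∀ i, primeWord (z i) (ts i) = psiInf (z i) (ts (i + 1))

def HeadUnique (t : ℕ → A) : Prop := ∀ m, t (m + 1) ≠ t 0

theorem not_headUnique_psiInf (z : A) (v : ℕ → A) : ¬ HeadUnique (psiInf z v) := by
  set P := psiW z (prefixList v 1)
  have hL : 1 ≤ P.length := le_length_psiW_prefixList z v 1
  have hz : psiInf z v P.length = z := by
    simpa [P] using (isPrefixInf_getElem (isPrefixInf_psiW_append_psiInf z v 1)
      (j := P.length) (by simp [P])).symm
  intro h
  apply h (P.length - 1)
  rw [Nat.sub_add_cancel hL, hz, psiInf_zero]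

/-- The prefix of `ts 0` covered by the image, under `MuW z j`, of the first letter of `ts j`;
see `IsDesubstitution.exists_append_headBlock`. -/
def headBlock (ts : ℕ → ℕ → A) (z : ℕ → A) : ℕ → List A
  | 0 => [ts 0 0]
  | j + 1 => if ts (j + 1) 0 = ts j 0 then headBlock ts z j
      else headBlock ts z j ++ MuW z j [ts (j + 1) 0]

variable {ts : ℕ → ℕ → A} {z : ℕ → A}

theorem headBlock_ne_nil (j : ℕ) : headBlock ts z j ≠ [] := by
  induction j with
  | zero => exact List.cons_ne_nil _ _
  | succ j ih =>
    rw [headBlock]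
    split_ifs
    · exact ih
    · simp [ih]

theorem length_headBlock_le_succ (j : ℕ) :
    (headBlock ts z j).length ≤ (headBlock ts z (j + 1)).length := by
  rw [headBlock]
  split_ifs <;> simp

theorem length_headBlock_lt_succ {j : ℕ} (h : ts (j + 1) 0 ≠ ts j 0) :
    (headBlock ts z j).length < (headBlock ts z (j + 1)).length := by
  rw [headBlock, if_neg h, List.length_append]
  have := length_le_length_MuW z j [ts (j + 1) 0]
  simp only [List.length_singleton] at this
  omega

namespace IsDesubstitution

theorem eq_psiInf (hts : IsDesubstitution ts z) {i : ℕ} (h : ts i 0 = z i) :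
    ts i = psiInf (z i) (ts (i + 1)) := by
  simpa [primeWord, h] using hts i

theorem consInf_eq_psiInf (hts : IsDesubstitution ts z) {i : ℕ} (h : ts i 0 ≠ z i) :
    consInf (z i) (ts i) = psiInf (z i) (ts (i + 1)) := by
  simpa [primeWord, h] using hts i

theorem head_succ (hts : IsDesubstitution ts z) {i : ℕ} (h : ts i 0 ≠ z i) :
    ts (i + 1) 0 = ts i 0 ∧ ts (i + 1) 0 ≠ z i := by
  have h1 := congrFun (hts.consInf_eq_psiInf h) 1
  rw [consInf_succ, psiInf_one] at h1
  split_ifs at h1 with he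
  · exact absurd h1 h
  · exact ⟨h1.symm, he⟩

theorem head_ne_of_headUnique (hts : IsDesubstitution ts z) {i : ℕ} (h : HeadUnique (ts i)) :
    ts i 0 ≠ z i := fun he => not_headUnique_psiInf (z i) (ts (i + 1)) (hts.eq_psiInf he ▸ h)

theorem headUnique_succ (hts : IsDesubstitution ts z) {i : ℕ} (h : HeadUnique (ts i)) :
    ts (i + 1) 0 = ts i 0 ∧ HeadUnique (ts (i + 1)) := by
  have hne := hts.head_ne_of_headUnique h
  obtain ⟨hhead, hz⟩ := hts.head_succ hne
  refine ⟨hhead, fun m hm => ?_⟩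
  obtain ⟨m', hm', hup⟩ := exists_psiInf_eq_of_eq (z := z i) hm hz
  rw [← hts.consInf_eq_psiInf hne, hhead] at hup
  obtain ⟨k, rfl⟩ : ∃ k, m' = k + 2 := ⟨m' - 2, by omega⟩
  exact h k hup

theorem head_eq_of_headUnique (hts : IsDesubstitution ts z) {j : ℕ} (h : HeadUnique (ts j)) :
    ∀ i, j ≤ i → ts i 0 = ts j 0 := by
  suffices ∀ i, j ≤ i → ts i 0 = ts j 0 ∧ HeadUnique (ts i) from fun i hi => (this i hi).1
  intro i hi
  induction i, hi using Nat.le_induction with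
  | base => exact ⟨rfl, h⟩
  | succ i _ ih =>
    obtain ⟨hhead, hu⟩ := hts.headUnique_succ ih.2
    exact ⟨hhead.trans ih.1, hu⟩

theorem exists_append_headBlock (hts : IsDesubstitution ts z) (j : ℕ) :
    ∃ d, d ++ headBlock ts z j = MuW z j [ts j 0] ∧ wordAppend d (ts 0) = MuInf z j (ts j) := by
  induction j with
  | zero => exact ⟨[], rfl, wordAppend_nil _⟩
  | succ j ih =>
    obtain ⟨d, hd, hdt⟩ := ih
    have hMuW : ∀ c, MuW z (j + 1) [c] = MuW z j (psiW (z j) [c]) := fun _ => rfl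
    by_cases hk : ts j 0 = z j
    · have hMu : MuInf z (j + 1) (ts (j + 1)) = MuInf z j (ts j) := by
        rw [hts.eq_psiInf hk]; rfl
      refine ⟨d, ?_, hdt.trans hMu.symm⟩
      rw [headBlock, hMuW, psiW_singleton]
      by_cases hb : ts (j + 1) 0 = ts j 0
      · rw [if_pos hb, if_pos (hb.trans hk), ← hk, hd]
      · rw [if_neg hb, if_neg fun h => hb (h.trans hk.symm),
          show [z j, ts (j + 1) 0] = [z j] ++ [ts (j + 1) 0] from rfl, MuW_append, ← hk, ← hd,
          List.append_assoc]
    · obtain ⟨hhead, hbz⟩ := hts.head_succ hk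
      refine ⟨MuW z j [z j] ++ d, ?_, ?_⟩
      · rw [headBlock, if_pos hhead, hMuW, psiW_singleton, if_neg hbz, hhead,
          show [z j, ts j 0] = [z j] ++ [ts j 0] from rfl, MuW_append, ← hd, List.append_assoc]
      · rw [wordAppend_append, hdt, ← MuInf_consInf, hts.consInf_eq_psiInf hk]
        rfl

theorem headBlock_suffix (hts : IsDesubstitution ts z) (j : ℕ) :
    headBlock ts z j <:+ MuW z j [ts j 0] := by
  obtain ⟨d, hd, -⟩ := hts.exists_append_headBlock j
  exact ⟨d, hd⟩

theorem eq_wordAppend_headBlock (hts : IsDesubstitution ts z) (j : ℕ) :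
    ts 0 = wordAppend (headBlock ts z j) (MuInf z j (fun n => ts j (n + 1))) := by
  obtain ⟨d, hd, hdt⟩ := hts.exists_append_headBlock j
  apply wordAppend_cancel (d := d)
  rw [hdt, ← wordAppend_append, hd, ← MuInf_consInf, consInf_shift]

theorem headUnique_of_length_headBlock (hts : IsDesubstitution ts z) {p j : ℕ}
    (hp : ∀ m, FactorAt (ts 0) (prefixList (ts 0) p) m → m = 0)
    (hlen : p ≤ (headBlock ts z j).length) : HeadUnique (ts j) := by
  intro m hm
  obtain ⟨d, hd, -⟩ := hts.exists_append_headBlock j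
  have ht0 := hts.eq_wordAppend_headBlock j
  -- a second occurrence of the first letter of `ts j` gives a second occurrence of the block
  obtain ⟨m', hm'⟩ := MuInf_isFactorInf z j
    (v := fun n => ts j (n + 1)) ⟨m, factorAt_cons.2 ⟨hm, factorAt_nil _ _⟩⟩
  rw [← hd] at hm'
  have hocc : FactorAt (ts 0) (headBlock ts z j)
      ((headBlock ts z j).length + (m' + d.length)) := by
    rw [ht0]
    exact factorAt_wordAppend.2 (factorAt_append.1 hm').2
  have hpre : prefixList (ts 0) p <+: headBlock ts z j := by
    refine isPrefixInf_prefix_of_le (isPrefixInf_prefixList _ _) ?_ (by rwa [prefixList_length])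
    rw [ht0]
    exact isPrefixInf_wordAppend _ _
  have := hp _ (factorAt_prefix hpre hocc)
  have := List.length_pos_iff.2 (headBlock_ne_nil (ts := ts) (z := z) j)
  omega

theorem eventually_head_eq (hts : IsDesubstitution ts z) (hnr : ¬ Recurrent (ts 0)) :
    ∃ N f, ∀ j, N ≤ j → ts j 0 = f := by
  obtain ⟨p, hp⟩ := exists_prefixList_factorAt_eq_zero hnr
  by_cases hlong : ∃ j, p ≤ (headBlock ts z j).length
  · obtain ⟨j, hj⟩ := hlong
    exact ⟨j, ts j 0, hts.head_eq_of_headUnique (hts.headUnique_of_length_headBlock hp hj)⟩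
  push Not at hlong
  obtain ⟨N, hN⟩ := eventually_not_of_bounded (P := fun j => ts (j + 1) 0 ≠ ts j 0) hlong
    length_headBlock_le_succ fun j => length_headBlock_lt_succ
  refine ⟨N, ts N 0, fun j hj => ?_⟩
  induction j, hj using Nat.le_induction with
  | base => rfl
  | succ j hj ih => rw [← ih]; exact not_not.1 (hN j hj)

theorem tail_eq_psiInf (hts : IsDesubstitution ts z) {i : ℕ} (h : ts (i + 1) 0 = ts i 0) :
    (fun n => ts i (n + 1)) = psiInf (z i) (fun n => ts (i + 1) (n + 1)) := by
  have himg : psiInf (z i) (ts (i + 1)) =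
      wordAppend (psiW (z i) [ts i 0]) (psiInf (z i) (fun n => ts (i + 1) (n + 1))) := by
    rw [← h, ← psiInf_consInf, consInf_shift]
  funext n
  show ts i (n + 1) = _
  by_cases hk : ts i 0 = z i
  · rw [congrFun ((hts.eq_psiInf hk).trans himg) (n + 1), psiW_singleton, if_pos hk,
      wordAppend_ge (by simp)]
    simp
  · have := congrFun ((hts.consInf_eq_psiInf hk).trans himg) (n + 2)
    rw [consInf_succ] at this
    rw [this, psiW_singleton, if_neg hk, wordAppend_ge (by simp)]
    simp

theorem isPsiChain_tails (hts : IsDesubstitution ts z) {N : ℕ} {f : A}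
    (hf : ∀ j, N ≤ j → ts j 0 = f) :
    IsPsiChain (fun k n => ts (N + k) (n + 1)) (fun k => z (N + k)) := fun k =>
  hts.tail_eq_psiInf ((hf _ (by omega)).trans (hf _ (by omega)).symm)

theorem recurrent_of_frequently (hts : IsDesubstitution ts z) {N : ℕ} {f : A}
    (hf : ∀ j, N ≤ j → ts j 0 = f) (hfreq : ∀ j, ∃ k, j ≤ k ∧ z k = f) : Recurrent (ts N) := by
  have h := (hts.isPsiChain_tails hf).recurrent_consInf (f := f) fun j => by
    obtain ⟨k, hk, hkf⟩ := hfreq (N + j)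
    exact ⟨k - N, by omega, by rwa [Nat.add_sub_cancel' (by omega)]⟩
  rwa [← hf N le_rfl, Nat.add_zero, consInf_shift] at h

theorem exists_decomposition (hts : IsDesubstitution ts z) {N : ℕ} {f : A}
    (hf : ∀ j, N ≤ j → ts j 0 = f) (hz : ∀ j, N ≤ j → z j ≠ f) :
    ∃ (x : A) (s : ℕ → A) (μ : List A → List A) (p : ℕ) (v : List A) (y : ℕ → A),
      (∀ n, s n ≠ x) ∧ StdEpisturmian s ∧ PureEpistandard μ ∧
      v ≠ [] ∧ v <:+ μ ((prefixList s p).reverse ++ [x]) ∧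
      IsMorphImage μ s y ∧ ts 0 = wordAppend v y := by
  have hchain := hts.isPsiChain_tails hf
  refine ⟨f, fun n => ts N (n + 1), MuW z N, 0, headBlock ts z N,
    MuInf z N (fun n => ts N (n + 1)), hchain.ne_of_forall_ne (fun k => hz _ (by omega)) 0,
    hchain.stdEpisturmian, pureEpistandard_MuW z N, headBlock_ne_nil N, ?_,
    isMorphImage_MuInf z N _, hts.eq_wordAppend_headBlock N⟩
  rw [prefixList_zero, List.reverse_nil, List.nil_append, ← hf N le_rfl]
  exact hts.headBlock_suffix N

end IsDesubstitution

end Desubstitution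

theorem decomposition_implies_form_general {A : Type*} [DecidableEq A] (t : ℕ → A)
    (h : ∃ (ts : ℕ → ℕ → A) (x : ℕ → A),
      ts 0 = t ∧ (∀ i, ¬ Recurrent (ts i)) ∧
      ∀ i : ℕ, IsMorphImage (psiW (x (i + 1))) (ts (i + 1))
        (if ts i 0 = x (i + 1) then ts i else consInf (x (i + 1)) (ts i))) :
    ∃ (x : A) (s : ℕ → A) (μ : List A → List A) (p : ℕ) (v : List A) (y : ℕ → A),
      (∀ n, s n ≠ x) ∧ StdEpisturmian s ∧ PureEpistandard μ ∧
      v ≠ [] ∧ v <:+ μ ((prefixList s p).reverse ++ [x]) ∧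
      IsMorphImage μ s y ∧ t = wordAppend v y := by
  obtain ⟨ts, x, rfl, hnr, hm⟩ := h
  have hts : IsDesubstitution ts (fun i => x (i + 1)) := fun i => eq_psiInf_of_isMorphImage (hm i)
  obtain ⟨N, f, hf⟩ := hts.eventually_head_eq (hnr 0)
  by_cases hfreq : ∀ j, ∃ k, j ≤ k ∧ x (k + 1) = f
  · exact absurd (hts.recurrent_of_frequently hf hfreq) (hnr N)
  push Not at hfreq
  obtain ⟨M, hM⟩ := hfreq
  exact hts.exists_decomposition (N := max N M) (fun j hj => hf j (le_of_max_le_left hj))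
    fun j hj => hM j (le_of_max_le_right hj)

/-- If `t` with `Alph(t) = A` admits an infinite sequence of non-recurrent
infinite words `t⁽ⁱ⁾` and letters `x₁, x₂, …` with `t⁽⁰⁾ = t` and
`t'⁽ⁱ⁻¹⁾ = ψ_{xᵢ}(t⁽ⁱ⁾)` (where `t'⁽ⁱ⁻¹⁾ = t⁽ⁱ⁻¹⁾` if `t⁽ⁱ⁻¹⁾` begins with `xᵢ`, and
`t'⁽ⁱ⁻¹⁾ = xᵢ·t⁽ⁱ⁻¹⁾` otherwise), then `t = v·μ(s)` for a letter `x ∈ A`, a standard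
episturmian word `s` over `A \ {x}`, a pure epistandard morphism `μ`, and a non-empty
suffix `v` of `μ(s̃_p x)` for some `p ∈ ℕ`. -/
theorem decomposition_implies_form {A : Type*} [Fintype A] [DecidableEq A] (t : ℕ → A)
    (hAlph : ∀ a : A, ∃ n, t n = a)
    (h : ∃ (ts : ℕ → ℕ → A) (x : ℕ → A),
      ts 0 = t ∧ (∀ i, ¬ Recurrent (ts i)) ∧
      ∀ i : ℕ, IsMorphImage (psiW (x (i + 1))) (ts (i + 1))
        (if ts i 0 = x (i + 1) then ts i else consInf (x (i + 1)) (ts i))) :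
    ∃ (x : A) (s : ℕ → A) (μ : List A → List A) (p : ℕ) (v : List A) (y : ℕ → A),
      (∀ n, s n ≠ x) ∧ StdEpisturmian s ∧ PureEpistandard μ ∧
      v ≠ [] ∧ v <:+ μ ((prefixList s p).reverse ++ [x]) ∧
      IsMorphImage μ s y ∧ t = wordAppend v y :=
  decomposition_implies_form_general t h
end

section
/- An infinite word s over the two-letter alphabet {a, b} with a < b is standard Sturmian if and only if a·s ≤ min(s) ≤ max(s) ≤ b·s in the lexicographic order. -/
open scoped Classical

namespace StuAux

@[simp] lemma consInf_zero {A : Type*} (c : A) (t : ℕ → A) : consInf c t 0 = c := rfl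
@[simp] lemma consInf_succ {A : Type*} (c : A) (t : ℕ → A) (n : ℕ) : consInf c t (n+1) = t n := rfl

/-- shift of an infinite word -/
def sh (a : ℕ) (t : ℕ → Bool) : ℕ → Bool := fun n => t (a + n)

@[simp] lemma sh_zero (t : ℕ → Bool) : sh 0 t = t := by funext n; simp [sh]

lemma sh_sh (a b : ℕ) (t : ℕ → Bool) : sh a (sh b t) = sh (b + a) t := by
  funext n; simp [sh, Nat.add_assoc]

lemma sh_apply (a : ℕ) (t : ℕ → Bool) (n : ℕ) : sh a t n = t (a + n) := rfl

lemma sh_consInf (c : Bool) (t : ℕ → Bool) : sh 1 (consInf c t) = t := by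
  funext n; show consInf c t (1 + n) = t n
  rw [Nat.add_comm]
  rfl

/-- number of `true`s among the first `k` letters -/
def cnt (t : ℕ → Bool) (k : ℕ) : ℕ := ∑ j ∈ Finset.range k, (if t j then 1 else 0)

@[simp] lemma cnt_zero (t : ℕ → Bool) : cnt t 0 = 0 := by simp [cnt]

lemma cnt_succ (t : ℕ → Bool) (k : ℕ) :
    cnt t (k + 1) = cnt t k + (if t k then 1 else 0) := Finset.sum_range_succ _ _

lemma cnt_head (t : ℕ → Bool) (k : ℕ) :
    cnt t (k + 1) = (if t 0 then 1 else 0) + cnt (sh 1 t) k := by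
  rw [cnt, Finset.sum_range_succ', Nat.add_comm]
  congr 1
  refine Finset.sum_congr rfl fun j _ => ?_
  simp [sh, Nat.add_comm 1 j]

lemma cnt_split (t : ℕ → Bool) (a b : ℕ) :
    cnt t (a + b) = cnt t a + cnt (sh a t) b := by
  induction b with
  | zero => simp
  | succ b ih =>
      rw [← Nat.add_assoc, cnt_succ, ih, cnt_succ, Nat.add_assoc]
      rfl

lemma cnt_congr {x y : ℕ → Bool} {k : ℕ} (h : ∀ j < k, x j = y j) : cnt x k = cnt y k := by
  refine Finset.sum_congr rfl fun j hj => ?_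
  rw [h j (Finset.mem_range.mp hj)]

lemma cnt_le (t : ℕ → Bool) (k : ℕ) : cnt t k ≤ k := by
  induction k with
  | zero => simp
  | succ k ih => rw [cnt_succ]; split <;> omega

lemma cnt_mono (t : ℕ → Bool) {a b : ℕ} (h : a ≤ b) : cnt t a ≤ cnt t b := by
  have : b = a + (b - a) := by omega
  rw [this, cnt_split]; omega

/-- value of the length-`k` prefix read as a binary number, MSB first -/
def val (k : ℕ) (t : ℕ → Bool) : ℕ :=
  ∑ j ∈ Finset.range k, (if t j then 2 ^ (k - 1 - j) else 0)

@[simp] lemma val_zero (t : ℕ → Bool) : val 0 t = 0 := by simp [val]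

lemma val_succ (t : ℕ → Bool) (k : ℕ) :
    val (k + 1) t = 2 * val k t + (if t k then 1 else 0) := by
  rw [val, Finset.sum_range_succ]
  have h1 : ∑ j ∈ Finset.range k, (if t j then 2 ^ (k + 1 - 1 - j) else 0)
      = 2 * val k t := by
    rw [val, Finset.mul_sum]
    refine Finset.sum_congr rfl fun j hj => ?_
    have hj' := Finset.mem_range.mp hj
    have : k + 1 - 1 - j = (k - 1 - j) + 1 := by omega
    rw [this, pow_succ]
    split <;> ring
  rw [h1]
  congr 1
  simp

lemma val_head (t : ℕ → Bool) (k : ℕ) :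
    val (k + 1) t = (if t 0 then 2 ^ k else 0) + val k (sh 1 t) := by
  rw [val, Finset.sum_range_succ']
  have hsum : ∑ j ∈ Finset.range k, (if t (j + 1) then 2 ^ (k + 1 - 1 - (j + 1)) else 0)
      = val k (sh 1 t) := by
    refine Finset.sum_congr rfl fun j _ => ?_
    have : k + 1 - 1 - (j + 1) = k - 1 - j := by omega
    rw [this]
    simp [sh, Nat.add_comm 1 j]
  rw [hsum, Nat.add_comm]
  rfl

lemma val_congr {x y : ℕ → Bool} {k : ℕ} (h : ∀ j < k, x j = y j) : val k x = val k y := by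
  refine Finset.sum_congr rfl fun j hj => ?_
  rw [h j (Finset.mem_range.mp hj)]

lemma val_lt (t : ℕ → Bool) (k : ℕ) : val k t < 2 ^ k := by
  induction k with
  | zero => simp
  | succ k ih =>
      rw [val_succ, pow_succ]
      split <;> omega

lemma val_split (t : ℕ → Bool) (a b : ℕ) :
    val (a + b) t = val a t * 2 ^ b + val b (sh a t) := by
  induction b with
  | zero => simp
  | succ b ih =>
      rw [← Nat.add_assoc, val_succ, ih, val_succ, pow_succ]
      have : (if t (a + b) then 1 else 0) = (if sh a t b then 1 else 0) := rfl
      rw [this]; ring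

end StuAux

namespace StuAux

lemma bool_lt_iff (a b : Bool) : a < b ↔ a = false ∧ b = true := by
  cases a <;> cases b <;> simp <;> decide

lemma lex_cons_iff {r : Bool → Bool → Prop} {a b : Bool} {u v : List Bool} :
    List.Lex r (a :: u) (b :: v) ↔ r a b ∨ (a = b ∧ List.Lex r u v) := by
  constructor
  · intro h
    cases h with
    | cons h => exact Or.inr ⟨rfl, h⟩
    | rel h => exact Or.inl h
  · rintro (h | ⟨rfl, h⟩)
    · exact List.Lex.rel h
    · exact List.Lex.cons h

lemma listLe_cons_iff {r : Bool → Bool → Prop} {a b : Bool} {u v : List Bool} :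
    listLe r (a :: u) (b :: v) ↔ r a b ∨ (a = b ∧ listLe r u v) := by
  unfold listLe
  rw [lex_cons_iff, List.cons.injEq]
  tauto

@[simp] lemma pfx_zero (t : ℕ → Bool) : prefixList t 0 = [] := rfl

@[simp] lemma pfx_length (t : ℕ → Bool) (k : ℕ) : (prefixList t k).length = k := by
  simp [prefixList]

lemma pfx_cons (t : ℕ → Bool) (k : ℕ) :
    prefixList t (k + 1) = t 0 :: prefixList (sh 1 t) k := by
  unfold prefixList
  rw [List.range_succ_eq_map, List.map_cons, List.map_map]
  congr 1
  refine List.map_congr_left fun j _ => ?_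
  simp [sh, Nat.add_comm 1 j, Nat.succ_eq_add_one]

lemma pfx_eq_iff {x y : ℕ → Bool} {k : ℕ} :
    prefixList x k = prefixList y k ↔ ∀ j < k, x j = y j := by
  constructor
  · intro h j hj
    have h2 := congrArg (fun l : List Bool => l[j]?) h
    simpa [prefixList, hj] using h2
  · intro h
    exact List.map_congr_left fun j hj => h j (List.mem_range.mp hj)

/-- factors of an infinite word are exactly prefixes of shifts -/
lemma isFactor_iff {s : ℕ → Bool} (u : List Bool) :
    IsFactorInf s u ↔ ∃ i, u = prefixList (sh i s) u.length := Iff.rfl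

lemma isFactor_pfx_sh (s : ℕ → Bool) (i k : ℕ) :
    IsFactorInf s (prefixList (sh i s) k) := by
  rw [isFactor_iff]
  exact ⟨i, by rw [pfx_length]⟩

/-- strict comparison of values from a first lexicographic difference -/
lemma val_lt_of_lexlt {x y : ℕ → Bool} {i k : ℕ} (hik : i < k)
    (hagree : ∀ j < i, x j = y j) (hx : x i = false) (hy : y i = true) :
    val k x < val k y := by
  set m := k - (i + 1) with hm
  have hk : (i + 1) + m = k := by omega
  have hc : val i x = val i y := val_congr hagree
  have e1 : val k x = (2 * val i x) * 2 ^ m + val m (sh (i + 1) x) := by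
    rw [← hk, val_split, val_succ, hx]
    simp
  have e2 : val k y = (2 * val i x + 1) * 2 ^ m + val m (sh (i + 1) y) := by
    rw [← hk, val_split, val_succ, hy, hc]
    simp
  have h1 : val m (sh (i + 1) x) < 2 ^ m := val_lt _ _
  calc val k x = (2 * val i x) * 2 ^ m + val m (sh (i + 1) x) := e1
    _ < (2 * val i x) * 2 ^ m + 2 ^ m := by omega
    _ = (2 * val i x + 1) * 2 ^ m := by ring
    _ ≤ (2 * val i x + 1) * 2 ^ m + val m (sh (i + 1) y) := Nat.le_add_right _ _
    _ = val k y := e2.symm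

/-- the list/val bridge -/
lemma listLe_iff_val {x y : ℕ → Bool} {k : ℕ} :
    listLe (· < ·) (prefixList x k) (prefixList y k) ↔ val k x ≤ val k y := by
  induction k generalizing x y with
  | zero => simp [listLe]
  | succ k ih =>
      rw [pfx_cons x, pfx_cons y, listLe_cons_iff, val_head, val_head]
      have h1 := val_lt (sh 1 x) k
      have h2 := val_lt (sh 1 y) k
      cases hx : x 0 <;> cases hy : y 0 <;>
        simp [hx, hy, ih, show ¬((true:Bool) < false) from by decide,
              show ¬((false:Bool) < false) from by decide,
              show ¬((true:Bool) < true) from by decide,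
              show ((false:Bool) < true) from by decide] <;> omega


/-- the infinite/val bridge -/
lemma infLe_iff_val {x y : ℕ → Bool} :
    infLe (· < ·) x y ↔ ∀ k, val k x ≤ val k y := by
  constructor
  · rintro (rfl | ⟨i, hagree, hlt⟩) k
    · exact le_rfl
    · rw [bool_lt_iff] at hlt
      rcases le_or_gt k i with hk | hk
      · exact (val_congr fun j hj => hagree j (lt_of_lt_of_le hj hk)).le
      · exact (val_lt_of_lexlt hk hagree hlt.1 hlt.2).le
  · intro h
    by_cases hxy : x = y
    · exact Or.inl hxy
    · have hne : ∃ n, x n ≠ y n := Function.ne_iff.mp hxy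
      right
      refine ⟨Nat.find hne, fun j hj => not_not.mp (Nat.find_min hne hj), ?_⟩
      have hd := Nat.find_spec hne
      set i := Nat.find hne
      cases hx : x i <;> cases hy : y i
      · rw [hx, hy] at hd; exact absurd rfl hd
      · decide
      · have hagree' : ∀ j < i, y j = x j :=
          fun j hj => (not_not.mp (Nat.find_min hne hj)).symm
        have := val_lt_of_lexlt (show i < i + 1 by omega) hagree' hy hx
        exact absurd (h (i + 1)) (by omega)
      · rw [hx, hy] at hd; exact absurd rfl hd

/-- counting domination implies lexicographic comparison on prefixes -/
lemma val_le_of_cnt {x y : ℕ → Bool} {k : ℕ} (h : ∀ n ≤ k, cnt x n ≤ cnt y n) :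
    val k x ≤ val k y := by
  by_cases hxy : ∀ j < k, x j = y j
  · exact (val_congr hxy).le
  · push_neg at hxy
    have hne : ∃ j, j < k ∧ x j ≠ y j := hxy
    set i := Nat.find hne with hi
    obtain ⟨hik, hd⟩ := Nat.find_spec hne
    have hagree : ∀ j < i, x j = y j := by
      intro j hj
      by_contra hcon
      exact Nat.find_min hne hj ⟨lt_trans hj hik, hcon⟩
    have hcnt : cnt x i = cnt y i := cnt_congr hagree
    have h1 : cnt x (i + 1) ≤ cnt y (i + 1) := h _ (by omega)
    rw [cnt_succ, cnt_succ, hcnt] at h1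
    cases hx : x i <;> cases hy : y i
    · rw [hx, hy] at hd; exact absurd rfl hd
    · exact (val_lt_of_lexlt hik hagree hx hy).le
    · rw [hx, hy] at h1; simp at h1
    · rw [hx, hy] at hd; exact absurd rfl hd

end StuAux

namespace StuAux

variable {s : ℕ → Bool}

/-- existence of the lexicographically minimal "limit of factors" word -/
lemma exists_min (s : ℕ → Bool) :
    ∃ m : ℕ → Bool, (∀ k, ∃ i, ∀ j < k, m j = s (i + j)) ∧
      (∀ k i, val k m ≤ val k (sh i s)) := by
  have hne : ∀ k, ∃ n, ∃ i, val k (sh i s) = n := fun k => ⟨_, 0, rfl⟩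
  set vmin : ℕ → ℕ := fun k => Nat.find (hne k) with hvmin
  have hmin : ∀ k i, vmin k ≤ val k (sh i s) := fun k i => Nat.find_le ⟨i, rfl⟩
  have hex : ∀ k, ∃ i, val k (sh i s) = vmin k := fun k => Nat.find_spec (hne k)
  set C : ℕ → ℕ := fun k => (hex k).choose with hC
  have hCspec : ∀ k, val k (sh (C k) s) = vmin k := fun k => (hex k).choose_spec
  have key : ∀ k j, j ≤ k → val j (sh (C k) s) = vmin j := by
    intro k j hj
    refine le_antisymm ?_ (hmin j _)
    by_contra hcon
    push_neg at hcon
    have e1 : val k (sh (C k) s) = val j (sh (C k) s) * 2 ^ (k - j) + val (k - j) (sh (C k + j) s) := by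
      rw [← sh_sh j (C k) s, ← val_split]
      congr 1
      omega
    have e2 : val k (sh (C j) s) = vmin j * 2 ^ (k - j) + val (k - j) (sh (C j + j) s) := by
      rw [← hCspec j, ← sh_sh j (C j) s, ← val_split]
      congr 1
      omega
    have h3 : val (k - j) (sh (C j + j) s) < 2 ^ (k - j) := val_lt _ _
    have h4 : val k (sh (C j) s) < val k (sh (C k) s) := by
      calc val k (sh (C j) s) = vmin j * 2 ^ (k - j) + val (k - j) (sh (C j + j) s) := e2
        _ < (vmin j + 1) * 2 ^ (k - j) := by
            have : (vmin j + 1) * 2 ^ (k - j) = vmin j * 2 ^ (k - j) + 2 ^ (k - j) := by ring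
            omega
        _ ≤ val j (sh (C k) s) * 2 ^ (k - j) := by
            apply Nat.mul_le_mul_right
            omega
        _ ≤ val k (sh (C k) s) := by rw [e1]; exact Nat.le_add_right _ _
    have h5 := hmin k (C j)
    rw [hCspec k] at h4
    omega
  have bit : ∀ k j, j < k → vmin (j + 1) = 2 * vmin j + (if s (C k + j) then 1 else 0) := by
    intro k j hj
    have := val_succ (sh (C k) s) j
    rw [key k (j + 1) (by omega), key k j (by omega)] at this
    exact this
  refine ⟨fun n => decide (vmin (n + 1) = 2 * vmin n + 1), fun k => ⟨C k, ?_⟩, fun k i => ?_⟩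
  · intro j hj
    have hb := bit k j hj
    cases hs : s (C k + j)
    · simp only [hs, if_neg Bool.false_ne_true] at hb
      simp [hb]
    · simp only [hs, if_pos rfl] at hb
      simp [hb]
  · have hagg : ∀ j < k, (fun n => decide (vmin (n + 1) = 2 * vmin n + 1)) j = s (C k + j) := by
      intro j hj
      have hb := bit k j hj
      cases hs : s (C k + j)
      · simp only [hs, if_neg Bool.false_ne_true] at hb
        simp [hb]
      · simp only [hs, if_pos rfl] at hb
        simp [hb]
    calc val k (fun n => decide (vmin (n + 1) = 2 * vmin n + 1))
        = val k (sh (C k) s) := val_congr hagg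
      _ = vmin k := hCspec k
      _ ≤ val k (sh i s) := hmin k i

/-- existence of the lexicographically maximal "limit of factors" word -/
lemma exists_max (s : ℕ → Bool) :
    ∃ M : ℕ → Bool, (∀ k, ∃ i, ∀ j < k, M j = s (i + j)) ∧
      (∀ k i, val k (sh i s) ≤ val k M) := by
  have hne : ∀ k, ∃ n, ∃ i, val k (sh i s) + n = 2 ^ k - 1 := by
    intro k
    have := val_lt (sh 0 s) k
    exact ⟨2 ^ k - 1 - val k (sh 0 s), 0, by omega⟩
  set cvx : ℕ → ℕ := fun k => Nat.find (hne k) with hcvx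
  set vmax : ℕ → ℕ := fun k => 2 ^ k - 1 - cvx k with hvmaxdef
  have hmax : ∀ k i, val k (sh i s) ≤ vmax k := by
    intro k i
    have h2 := val_lt (sh i s) k
    have h1 : Nat.find (hne k) ≤ 2 ^ k - 1 - val k (sh i s) :=
      Nat.find_le ⟨i, by omega⟩
    simp only [hvmaxdef, hcvx]
    omega
  have hex : ∀ k, ∃ i, val k (sh i s) = vmax k := by
    intro k
    obtain ⟨i, hi⟩ := Nat.find_spec (hne k)
    exact ⟨i, by simp only [hvmaxdef, hcvx]; omega⟩
  set C : ℕ → ℕ := fun k => (hex k).choose with hC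
  have hCspec : ∀ k, val k (sh (C k) s) = vmax k := fun k => (hex k).choose_spec
  have key : ∀ k j, j ≤ k → val j (sh (C k) s) = vmax j := by
    intro k j hj
    refine le_antisymm (hmax j _) ?_
    by_contra hcon
    push_neg at hcon
    have e1 : val k (sh (C k) s) = val j (sh (C k) s) * 2 ^ (k - j) + val (k - j) (sh (C k + j) s) := by
      rw [← sh_sh j (C k) s, ← val_split]
      congr 1
      omega
    have e2 : val k (sh (C j) s) = vmax j * 2 ^ (k - j) + val (k - j) (sh (C j + j) s) := by
      rw [← hCspec j, ← sh_sh j (C j) s, ← val_split]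
      congr 1
      omega
    have h3 : val (k - j) (sh (C k + j) s) < 2 ^ (k - j) := val_lt _ _
    have h4 : val k (sh (C k) s) < val k (sh (C j) s) := by
      calc val k (sh (C k) s) = val j (sh (C k) s) * 2 ^ (k - j) + val (k - j) (sh (C k + j) s) := e1
        _ < (val j (sh (C k) s) + 1) * 2 ^ (k - j) := by
            have : (val j (sh (C k) s) + 1) * 2 ^ (k - j)
                = val j (sh (C k) s) * 2 ^ (k - j) + 2 ^ (k - j) := by ring
            omega
        _ ≤ vmax j * 2 ^ (k - j) := by
            apply Nat.mul_le_mul_right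
            omega
        _ ≤ val k (sh (C j) s) := by rw [e2]; exact Nat.le_add_right _ _
    have h5 := hmax k (C j)
    rw [hCspec k] at h4
    omega
  have bit : ∀ k j, j < k → vmax (j + 1) = 2 * vmax j + (if s (C k + j) then 1 else 0) := by
    intro k j hj
    have := val_succ (sh (C k) s) j
    rw [key k (j + 1) (by omega), key k j (by omega)] at this
    exact this
  refine ⟨fun n => decide (vmax (n + 1) = 2 * vmax n + 1), fun k => ⟨C k, ?_⟩, fun k i => ?_⟩
  · intro j hj
    have hb := bit k j hj
    cases hs : s (C k + j)
    · simp only [hs, if_neg Bool.false_ne_true] at hb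
      simp [hb]
    · simp only [hs, if_pos rfl] at hb
      simp [hb]
  · have hagg : ∀ j < k, (fun n => decide (vmax (n + 1) = 2 * vmax n + 1)) j = s (C k + j) := by
      intro j hj
      have hb := bit k j hj
      cases hs : s (C k + j)
      · simp only [hs, if_neg Bool.false_ne_true] at hb
        simp [hb]
      · simp only [hs, if_pos rfl] at hb
        simp [hb]
    calc val k (sh i s) ≤ vmax k := hmax k i
      _ = val k (sh (C k) s) := (hCspec k).symm
      _ = val k (fun n => decide (vmax (n + 1) = 2 * vmax n + 1)) := (val_congr hagg).symm

/-- packaging: a word whose prefixes are all factors, minimal in `val` at every length,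
is a lexicographic minimum in the sense of `IsMinInf`. -/
lemma isMinInf_of (m : ℕ → Bool) (hf : ∀ k, ∃ i, ∀ j < k, m j = s (i + j))
    (hv : ∀ k i, val k m ≤ val k (sh i s)) : IsMinInf (· < ·) s m := by
  intro k
  constructor
  · obtain ⟨i, hi⟩ := hf k
    rw [isFactor_iff, pfx_length]
    exact ⟨i, pfx_eq_iff.mpr fun j hj => hi j hj⟩
  · intro u hu hlen
    obtain ⟨i, hi⟩ := (isFactor_iff u).mp hu
    rw [hi, hlen]
    exact listLe_iff_val.mpr (hv k i)

lemma isMaxInf_of (M : ℕ → Bool) (hf : ∀ k, ∃ i, ∀ j < k, M j = s (i + j))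
    (hv : ∀ k i, val k (sh i s) ≤ val k M) : IsMaxInf (· < ·) s M := by
  intro k
  constructor
  · obtain ⟨i, hi⟩ := hf k
    rw [isFactor_iff, pfx_length]
    exact ⟨i, pfx_eq_iff.mpr fun j hj => hi j hj⟩
  · intro u hu hlen
    obtain ⟨i, hi⟩ := (isFactor_iff u).mp hu
    rw [hi, hlen]
    exact listLe_iff_val.mpr (hv k i)

end StuAux

namespace StuAux

lemma fsuper (x y : ℝ) : ⌊x⌋ + ⌊y⌋ ≤ ⌊x + y⌋ := by
  apply Int.le_floor.mpr
  push_cast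
  exact add_le_add (Int.floor_le x) (Int.floor_le y)

lemma fsub (x y : ℝ) : ⌊x + y⌋ ≤ ⌊x⌋ + ⌊y⌋ + 1 := by
  have h : x + y < ((⌊x⌋ + ⌊y⌋ + 2 : ℤ) : ℝ) := by
    push_cast
    linarith [Int.lt_floor_add_one x, Int.lt_floor_add_one y]
  have := Int.floor_lt.mpr h
  omega

lemma csub (x y : ℝ) : ⌈x + y⌉ ≤ ⌈x⌉ + ⌈y⌉ := by
  apply Int.ceil_le.mpr
  push_cast
  exact add_le_add (Int.le_ceil x) (Int.le_ceil y)

lemma csuper (x y : ℝ) : ⌈x⌉ + ⌈y⌉ ≤ ⌈x + y⌉ + 1 := by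
  have h : ((⌈x⌉ + ⌈y⌉ - 2 : ℤ) : ℝ) < x + y := by
    push_cast
    linarith [Int.ceil_lt_add_one x, Int.ceil_lt_add_one y]
  have := Int.lt_ceil.mpr h
  omega

lemma floor_steps {α : ℝ} (h0 : 0 ≤ α) (h1 : α ≤ 1) (x : ℝ) :
    ⌊x⌋ ≤ ⌊x + α⌋ ∧ ⌊x + α⌋ ≤ ⌊x⌋ + 1 := by
  constructor
  · exact Int.floor_le_floor (by linarith)
  · have h : x + α < ((⌊x⌋ + 2 : ℤ) : ℝ) := by
      push_cast
      linarith [Int.lt_floor_add_one x]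
    have := Int.floor_lt.mpr h
    omega

lemma ceil_steps {α : ℝ} (h0 : 0 ≤ α) (h1 : α ≤ 1) (x : ℝ) :
    ⌈x⌉ ≤ ⌈x + α⌉ ∧ ⌈x + α⌉ ≤ ⌈x⌉ + 1 := by
  constructor
  · exact Int.ceil_le_ceil (by linarith)
  · have h : ((⌈x⌉ : ℤ) : ℝ) ≥ x := Int.le_ceil x
    calc ⌈x + α⌉ ≤ ⌈x⌉ + ⌈α⌉ := csub x α
      _ ≤ ⌈x⌉ + 1 := by
          have : ⌈α⌉ ≤ 1 := Int.ceil_le.mpr (by norm_num; linarith)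
          omega

lemma cnt_floor {α : ℝ} {s : ℕ → Bool} (h0 : 0 ≤ α) (h1 : α ≤ 1)
    (hs : SturmianFloor α α s) :
    ∀ n, (cnt s n : ℤ) = ⌊((n : ℝ) + 1) * α⌋ - ⌊α⌋ := by
  intro n
  induction n with
  | zero => simp
  | succ n ih =>
      rw [cnt_succ]
      have hsn := hs n
      have e1 : ((n : ℝ) + 1) * α + α = (((n + 1 : ℕ) : ℝ) + 1) * α := by push_cast; ring
      have e2 : (n : ℝ) * α + α = ((n : ℝ) + 1) * α := by ring
      rw [e1, e2] at hsn
      have hst := floor_steps h0 h1 (((n : ℝ) + 1) * α)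
      have e3 : ((n : ℝ) + 1) * α + α = (((n + 1 : ℕ) : ℝ) + 1) * α := by push_cast; ring
      rw [e3] at hst
      cases hb : s n
      · rw [hb] at hsn
        simp only [Bool.false_eq_true, false_iff, not_not] at hsn
        push_cast
        rw [ih]
        push_cast at hsn ⊢
        omega
      · rw [hb] at hsn
        simp only [true_iff] at hsn
        push_cast
        rw [ih]
        push_cast at hsn hst ⊢
        norm_num
        omega

lemma cnt_ceil {α : ℝ} {s : ℕ → Bool} (h0 : 0 ≤ α) (h1 : α ≤ 1)
    (hs : SturmianCeil α α s) :
    ∀ n, (cnt s n : ℤ) = ⌈((n : ℝ) + 1) * α⌉ - ⌈α⌉ := by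
  intro n
  induction n with
  | zero => simp
  | succ n ih =>
      rw [cnt_succ]
      have hsn := hs n
      have e1 : ((n : ℝ) + 1) * α + α = (((n + 1 : ℕ) : ℝ) + 1) * α := by push_cast; ring
      have e2 : (n : ℝ) * α + α = ((n : ℝ) + 1) * α := by ring
      rw [e1, e2] at hsn
      have hst := ceil_steps h0 h1 (((n : ℝ) + 1) * α)
      have e3 : ((n : ℝ) + 1) * α + α = (((n + 1 : ℕ) : ℝ) + 1) * α := by push_cast; ring
      rw [e3] at hst
      cases hb : s n
      · rw [hb] at hsn
        simp only [Bool.false_eq_true, false_iff, not_not] at hsn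
        push_cast
        rw [ih]
        push_cast at hsn ⊢
        omega
      · rw [hb] at hsn
        simp only [true_iff] at hsn
        push_cast
        rw [ih]
        push_cast at hsn hst ⊢
        norm_num
        omega

lemma cnt_cons_succ (c : Bool) (s : ℕ → Bool) (n : ℕ) :
    cnt (consInf c s) (n + 1) = (if c then 1 else 0) + cnt s n := by
  rw [cnt_head, sh_consInf]
  rfl

end StuAux

namespace StuAux

lemma fl_one (m : ℕ) : ⌊((m : ℝ) + 1) * (1 : ℝ)⌋ = (m : ℤ) + 1 := by
  rw [mul_one, show ((m : ℝ) + 1) = ((m + 1 : ℕ) : ℝ) from by push_cast; ring,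
    Int.floor_natCast]
  push_cast; ring

lemma min_cnt_floor {α : ℝ} {s : ℕ → Bool} (h0 : 0 ≤ α) (h1 : α ≤ 1)
    (hs : SturmianFloor α α s) (i n : ℕ) :
    cnt (consInf false s) n ≤ cnt (sh i s) n := by
  cases n with
  | zero => simp
  | succ n =>
      rw [cnt_cons_succ]
      have hsplit := cnt_split s i (n + 1)
      have cf := cnt_floor h0 h1 hs
      have key : (cnt s n : ℤ) + (cnt s i : ℤ) ≤ (cnt s (i + (n + 1)) : ℤ) := by
        rw [cf n, cf i, cf (i + (n + 1))]
        have hsup := fsuper (((n : ℝ) + 1) * α) (((i : ℝ) + 1) * α)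
        have he : ((n : ℝ) + 1) * α + ((i : ℝ) + 1) * α
            = ((↑(i + (n + 1)) : ℝ) + 1) * α := by push_cast; ring
        rw [he] at hsup
        have hfl : 0 ≤ ⌊α⌋ := Int.floor_nonneg.mpr h0
        omega
      simp only [Bool.false_eq_true, if_false, Nat.zero_add]
      omega

lemma max_cnt_floor {α : ℝ} {s : ℕ → Bool} (h0 : 0 ≤ α) (h1 : α ≤ 1)
    (hs : SturmianFloor α α s) (i n : ℕ) :
    cnt (sh i s) n ≤ cnt (consInf true s) n := by
  cases n with
  | zero => simp
  | succ n =>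
      rw [cnt_cons_succ]
      have hsplit := cnt_split s i (n + 1)
      have cf := cnt_floor h0 h1 hs
      have key : (cnt s (i + (n + 1)) : ℤ) ≤ (cnt s i : ℤ) + 1 + (cnt s n : ℤ) := by
        rw [cf n, cf i, cf (i + (n + 1))]
        rcases eq_or_lt_of_le h1 with heq | hlt
        · subst heq
          rw [fl_one n, fl_one i, fl_one (i + (n + 1)), Int.floor_one]
          push_cast
          omega
        · have hfl : ⌊α⌋ = 0 := Int.floor_eq_zero_iff.mpr ⟨h0, hlt⟩
          have hsub := fsub (((i : ℝ) + 1) * α) (((n : ℝ) + 1) * α)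
          have he : ((i : ℝ) + 1) * α + ((n : ℝ) + 1) * α
              = ((↑(i + (n + 1)) : ℝ) + 1) * α := by push_cast; ring
          rw [he] at hsub
          omega
      simp only [if_true]
      omega

lemma min_cnt_ceil {α : ℝ} {s : ℕ → Bool} (h0 : 0 ≤ α) (h1 : α ≤ 1)
    (hs : SturmianCeil α α s) (i n : ℕ) :
    cnt (consInf false s) n ≤ cnt (sh i s) n := by
  cases n with
  | zero => simp
  | succ n =>
      rw [cnt_cons_succ]
      have hsplit := cnt_split s i (n + 1)
      have cc := cnt_ceil h0 h1 hs
      have key : (cnt s n : ℤ) + (cnt s i : ℤ) ≤ (cnt s (i + (n + 1)) : ℤ) := by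
        rw [cc n, cc i, cc (i + (n + 1))]
        rcases eq_or_lt_of_le h0 with heq | hpos
        · rw [← heq]
          norm_num
        · have hce : ⌈α⌉ = 1 := by
            have hc1 : (0 : ℤ) < ⌈α⌉ := Int.ceil_pos.mpr hpos
            have hc2 : ⌈α⌉ ≤ 1 := Int.ceil_le.mpr (by norm_num [h1])
            omega
          have hsup := csuper (((n : ℝ) + 1) * α) (((i : ℝ) + 1) * α)
          have he : ((n : ℝ) + 1) * α + ((i : ℝ) + 1) * α
              = ((↑(i + (n + 1)) : ℝ) + 1) * α := by push_cast; ring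
          rw [he] at hsup
          omega
      simp only [Bool.false_eq_true, if_false, Nat.zero_add]
      omega

lemma max_cnt_ceil {α : ℝ} {s : ℕ → Bool} (h0 : 0 ≤ α) (h1 : α ≤ 1)
    (hs : SturmianCeil α α s) (i n : ℕ) :
    cnt (sh i s) n ≤ cnt (consInf true s) n := by
  cases n with
  | zero => simp
  | succ n =>
      rw [cnt_cons_succ]
      have hsplit := cnt_split s i (n + 1)
      have cc := cnt_ceil h0 h1 hs
      have key : (cnt s (i + (n + 1)) : ℤ) ≤ (cnt s i : ℤ) + 1 + (cnt s n : ℤ) := by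
        rw [cc n, cc i, cc (i + (n + 1))]
        have hce : ⌈α⌉ ≤ 1 := Int.ceil_le.mpr (by norm_num [h1])
        have hsub := csub (((i : ℝ) + 1) * α) (((n : ℝ) + 1) * α)
        have he : ((i : ℝ) + 1) * α + ((n : ℝ) + 1) * α
            = ((↑(i + (n + 1)) : ℝ) + 1) * α := by push_cast; ring
        rw [he] at hsub
        omega
      simp only [if_true]
      omega

lemma pfx_factor_agree {s m : ℕ → Bool} {k : ℕ} (h : IsFactorInf s (prefixList m k)) :
    ∃ i, ∀ j < k, m j = s (i + j) := by
  obtain ⟨i, hi⟩ := (isFactor_iff (prefixList m k)).mp h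
  rw [pfx_length] at hi
  exact ⟨i, pfx_eq_iff.mp hi⟩

lemma forward {s : ℕ → Bool} (h : IsStandardSturmian s) :
    ∀ m M : ℕ → Bool, IsMinInf (· < ·) s m → IsMaxInf (· < ·) s M →
      infLe (· < ·) (consInf false s) m ∧ infLe (· < ·) m M ∧
        infLe (· < ·) M (consInf true s) := by
  obtain ⟨α, ⟨h0, h1⟩, hfc⟩ := h
  have key1 : ∀ i n, cnt (consInf false s) n ≤ cnt (sh i s) n := by
    rcases hfc with hf | hc
    · exact min_cnt_floor h0 h1 hf
    · exact min_cnt_ceil h0 h1 hc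
  have key2 : ∀ i n, cnt (sh i s) n ≤ cnt (consInf true s) n := by
    rcases hfc with hf | hc
    · exact max_cnt_floor h0 h1 hf
    · exact max_cnt_ceil h0 h1 hc
  intro m M hm hM
  refine ⟨infLe_iff_val.mpr fun k => ?_, infLe_iff_val.mpr fun k => ?_,
    infLe_iff_val.mpr fun k => ?_⟩
  · obtain ⟨i, hi⟩ := pfx_factor_agree (hm k).1
    calc val k (consInf false s) ≤ val k (sh i s) :=
          val_le_of_cnt fun n _ => key1 i n
      _ = val k m := val_congr (x := sh i s) (y := m) fun j hj => (hi j hj).symm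
  · exact listLe_iff_val.mp ((hM k).2 (prefixList m k) (hm k).1 (pfx_length m k))
  · obtain ⟨i, hi⟩ := pfx_factor_agree (hM k).1
    calc val k M = val k (sh i s) := val_congr (x := M) (y := sh i s) fun j hj => hi j hj
      _ ≤ val k (consInf true s) := val_le_of_cnt fun n _ => key2 i n

end StuAux

namespace StuAux

variable {s : ℕ → Bool}

lemma hd_cnt (s : ℕ → Bool) (a k : ℕ) :
    cnt (sh a s) (k + 1) = (if s a then 1 else 0) + cnt (sh (a + 1) s) k := by
  rw [cnt_head, sh_sh]
  rfl

lemma tl_cnt (s : ℕ → Bool) (a k : ℕ) :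
    cnt (sh a s) (k + 1) = cnt (sh a s) k + (if s (a + k) then 1 else 0) :=
  cnt_succ _ _

lemma split_cnt (s : ℕ → Bool) (a b c : ℕ) (h : b + c = a) :
    cnt (sh i s) a = cnt (sh i s) b + cnt (sh (i + b) s) c := by
  rw [← h, cnt_split, sh_sh]

/-- the balance property, from the two lexicographic bounds -/
lemma bal_of_keys {s : ℕ → Bool}
    (P1 : ∀ i k, val k (consInf false s) ≤ val k (sh i s))
    (P2 : ∀ i k, val k (sh i s) ≤ val k (consInf true s)) :
    ∀ k i i', cnt (sh i s) k ≤ cnt (sh i' s) k + 1 := by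
  by_contra hcon
  push_neg at hcon
  obtain ⟨k1, i1, i1', h1⟩ := hcon
  have hex : ∃ k, ∃ i i', cnt (sh i' s) k + 2 ≤ cnt (sh i s) k := ⟨k1, i1, i1', by omega⟩
  obtain ⟨i, i', hii⟩ := Nat.find_spec hex
  set k0 := Nat.find hex with hk0def
  have hmin : ∀ k', k' < k0 → ∀ a a', ¬ (cnt (sh a' s) k' + 2 ≤ cnt (sh a s) k') := by
    intro k' hk' a a' h
    exact Nat.find_min hex hk' ⟨a, a', h⟩
  have hk2 : 2 ≤ k0 := by
    have h2 := cnt_le (sh i s) k0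
    omega
  set l := k0 - 2 with hldef
  have hl : k0 = l + 2 := by omega
  rw [hl] at hii
  have hminl : ∀ k', k' < l + 2 → ∀ a a', ¬ (cnt (sh a' s) k' + 2 ≤ cnt (sh a s) k') := by
    intro k' hk'
    exact hmin k' (by omega)
  -- first letters
  have hsi : s i = true := by
    cases hb : s i
    · exfalso
      have e1 : cnt (sh i s) (l + 2) = (if s i then 1 else 0) + cnt (sh (i + 1) s) (l + 1) :=
        hd_cnt s i (l + 1)
      have e2 : cnt (sh i' s) (l + 2) = (if s i' then 1 else 0) + cnt (sh (i' + 1) s) (l + 1) :=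
        hd_cnt s i' (l + 1)
      rw [hb] at e1
      simp only [Bool.false_eq_true, if_false, Nat.zero_add] at e1
      refine hminl (l + 1) (by omega) (i + 1) (i' + 1) ?_
      split at e2 <;> omega
    · rfl
  have hsi' : s i' = false := by
    cases hb : s i'
    · rfl
    · exfalso
      have e1 : cnt (sh i s) (l + 2) = (if s i then 1 else 0) + cnt (sh (i + 1) s) (l + 1) :=
        hd_cnt s i (l + 1)
      have e2 : cnt (sh i' s) (l + 2) = (if s i' then 1 else 0) + cnt (sh (i' + 1) s) (l + 1) :=
        hd_cnt s i' (l + 1)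
      rw [hb] at e2
      simp only [if_true] at e2
      refine hminl (l + 1) (by omega) (i + 1) (i' + 1) ?_
      split at e1 <;> omega
  -- last letters
  have hti : s (i + (l + 1)) = true := by
    cases hb : s (i + (l + 1))
    · exfalso
      have e1 : cnt (sh i s) (l + 2) = cnt (sh i s) (l + 1) + (if s (i + (l + 1)) then 1 else 0) :=
        tl_cnt s i (l + 1)
      have e2 : cnt (sh i' s) (l + 2) = cnt (sh i' s) (l + 1) + (if s (i' + (l + 1)) then 1 else 0) :=
        tl_cnt s i' (l + 1)
      rw [hb] at e1
      simp only [Bool.false_eq_true, if_false, Nat.add_zero] at e1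
      refine hminl (l + 1) (by omega) i i' ?_
      split at e2 <;> omega
    · rfl
  have hti' : s (i' + (l + 1)) = false := by
    cases hb : s (i' + (l + 1))
    · rfl
    · exfalso
      have e1 : cnt (sh i s) (l + 2) = cnt (sh i s) (l + 1) + (if s (i + (l + 1)) then 1 else 0) :=
        tl_cnt s i (l + 1)
      have e2 : cnt (sh i' s) (l + 2) = cnt (sh i' s) (l + 1) + (if s (i' + (l + 1)) then 1 else 0) :=
        tl_cnt s i' (l + 1)
      rw [hb] at e2
      simp only [if_true] at e2
      refine hminl (l + 1) (by omega) i i' ?_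
      split at e1 <;> omega
  -- middles agree
  have hmid : ∀ j, j < l → s (i + 1 + j) = s (i' + 1 + j) := by
    by_contra hc
    push_neg at hc
    have hex2 : ∃ j, j < l ∧ s (i + 1 + j) ≠ s (i' + 1 + j) := hc
    obtain ⟨hj0l, hj0ne⟩ := Nat.find_spec hex2
    set j0 := Nat.find hex2 with hj0def
    have hag : ∀ j, j < j0 → s (i + 1 + j) = s (i' + 1 + j) := by
      intro j hj
      have hnm := Nat.find_min hex2 hj
      by_contra hne
      exact hnm ⟨by omega, hne⟩
    have hc0 : cnt (sh (i + 1) s) j0 = cnt (sh (i' + 1) s) j0 :=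
      cnt_congr fun j hj => hag j hj
    have pi1 : cnt (sh i s) (j0 + 2)
        = 1 + (cnt (sh (i + 1) s) j0 + (if s (i + 1 + j0) then 1 else 0)) := by
      rw [hd_cnt s i (j0 + 1), hsi, tl_cnt s (i + 1) j0]
      simp
    have pi2 : cnt (sh i' s) (j0 + 2)
        = cnt (sh (i' + 1) s) j0 + (if s (i' + 1 + j0) then 1 else 0) := by
      rw [hd_cnt s i' (j0 + 1), hsi', tl_cnt s (i' + 1) j0]
      simp
    cases hb : s (i + 1 + j0) <;> cases hb' : s (i' + 1 + j0)
    · exact hj0ne (by rw [hb, hb'])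
    · have spl1 := split_cnt s (i := i) (l + 2) (j0 + 2) (l - j0) (by omega)
      have spl2 := split_cnt s (i := i') (l + 2) (j0 + 2) (l - j0) (by omega)
      rw [hb] at pi1
      rw [hb'] at pi2
      simp only [Bool.false_eq_true, if_false, Nat.add_zero, if_true] at pi1 pi2
      refine hminl (l - j0) (by omega) (i + (j0 + 2)) (i' + (j0 + 2)) ?_ |>.elim
      omega
    · rw [hb] at pi1
      rw [hb'] at pi2
      simp only [Bool.false_eq_true, if_false, Nat.add_zero, if_true] at pi1 pi2
      refine hminl (j0 + 2) (by omega) i i' ?_ |>.elim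
      omega
    · exact hj0ne (by rw [hb, hb'])
  -- final lexicographic contradiction
  have e1 : val (l + 2) (sh i s) = 2 ^ (l + 1) + val (l + 1) (sh (i + 1) s) := by
    have h0 : sh i s 0 = true := hsi
    rw [val_head, sh_sh, h0]
    simp
  have e2 : val (l + 2) (consInf true s) = 2 ^ (l + 1) + val (l + 1) s := by
    rw [val_head, sh_consInf]
    simp [consInf_zero]
  have e3 : val (l + 2) (consInf false s) = val (l + 1) s := by
    rw [val_head, sh_consInf]
    simp [consInf_zero]
  have e4 : val (l + 2) (sh i' s) = val (l + 1) (sh (i' + 1) s) := by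
    have h0 : sh i' s 0 = false := hsi'
    rw [val_head, sh_sh, h0]
    simp
  have c1 : val (l + 1) (sh (i + 1) s) ≤ val (l + 1) s := by
    have hP := P2 i (l + 2)
    rw [e1, e2] at hP
    omega
  have c2 : val (l + 1) s ≤ val (l + 1) (sh (i' + 1) s) := by
    have hP := P1 i' (l + 2)
    rw [e3, e4] at hP
    omega
  have d1 : val (l + 1) (sh (i + 1) s) = 2 * val l (sh (i + 1) s) + 1 := by
    have hbit : sh (i + 1) s l = true := by
      show s (i + 1 + l) = true
      have harr : i + 1 + l = i + (l + 1) := by omega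
      rw [harr]
      exact hti
    rw [val_succ, hbit]
    simp
  have d2 : val (l + 1) (sh (i' + 1) s) = 2 * val l (sh (i' + 1) s) := by
    have hbit : sh (i' + 1) s l = false := by
      show s (i' + 1 + l) = false
      have harr : i' + 1 + l = i' + (l + 1) := by omega
      rw [harr]
      exact hti'
    rw [val_succ, hbit]
    simp
  have d3 : val l (sh (i + 1) s) = val l (sh (i' + 1) s) :=
    val_congr fun j hj => hmid j hj
  omega

end StuAux

namespace StuAux

lemma sh_cons (c : Bool) (t : ℕ → Bool) (k : ℕ) :
    sh (k + 1) (consInf c t) = sh k t := by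
  funext n
  show consInf c t (k + 1 + n) = t (k + n)
  have h : k + 1 + n = (k + n) + 1 := by omega
  rw [h]
  rfl

/-- the lexicographically least factor has least weight (given balance) -/
lemma least_diff {x y : ℕ → Bool} {k : ℕ} (h : ∃ j, j < k ∧ x j ≠ y j) :
    ∃ j, j < k ∧ x j ≠ y j ∧ ∀ j' < j, x j' = y j' := by
  have hjk := (Nat.find_spec h).1
  have hjne := (Nat.find_spec h).2
  refine ⟨Nat.find h, hjk, hjne, fun j' hj' => ?_⟩
  by_contra hne
  exact Nat.find_min h hj' ⟨by omega, hne⟩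

lemma W1_min {s m : ℕ → Bool}
    (Bal : ∀ k i i', cnt (sh i s) k ≤ cnt (sh i' s) k + 1)
    (hmf : ∀ k, ∃ i, ∀ j < k, m j = s (i + j))
    (hmv : ∀ k i, val k m ≤ val k (sh i s)) :
    ∀ k i, cnt m k ≤ cnt (sh i s) k := by
  intro k i
  by_contra hgt
  push_neg at hgt
  obtain ⟨i0, hi0⟩ := hmf k
  by_cases hag : ∀ j < k, m j = s (i + j)
  · have : cnt m k = cnt (sh i s) k := cnt_congr fun j hj => hag j hj
    omega
  · push_neg at hag
    obtain ⟨j, hjk, hjne, hagree⟩ := least_diff (x := m) (y := sh i s) hag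
    have hc0 : cnt m j = cnt (sh i s) j := cnt_congr fun j' hj' => hagree j' hj'
    -- direction is forced by val-minimality
    have hmj : m j = false ∧ s (i + j) = true := by
      cases hb : m j <;> cases hb' : s (i + j)
      · exact absurd (hb.trans (show (false : Bool) = sh i s j from hb'.symm)) hjne
      · exact ⟨rfl, rfl⟩
      · exfalso
        have hlt := val_lt_of_lexlt (x := sh i s) (y := m) hjk
          (fun j' hj' => (hagree j' hj').symm) hb' hb
        have := hmv k i
        omega
      · exact absurd (hb.trans (show (true : Bool) = sh i s j from hb'.symm)) hjne
    -- counting: the tails differ by 2, contradicting balance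
    have e1 : cnt m k = cnt m (j + 1) + cnt (sh (j + 1) m) (k - (j + 1)) := by
      rw [← cnt_split]
      congr 1
      omega
    have e2 : cnt (sh i s) k
        = cnt (sh i s) (j + 1) + cnt (sh (i + (j + 1)) s) (k - (j + 1)) :=
      split_cnt s k (j + 1) (k - (j + 1)) (by omega)
    have e3 : cnt m (j + 1) = cnt m j := by
      rw [cnt_succ, hmj.1]
      simp
    have e4 : cnt (sh i s) (j + 1) = cnt (sh i s) j + 1 := by
      rw [cnt_succ]
      have : sh i s j = true := hmj.2
      rw [this]
      simp
    have e5 : cnt (sh (j + 1) m) (k - (j + 1)) = cnt (sh (i0 + (j + 1)) s) (k - (j + 1)) := by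
      refine cnt_congr fun j' hj' => ?_
      show m (j + 1 + j') = s (i0 + (j + 1) + j')
      rw [hi0 (j + 1 + j') (by omega)]
      congr 1
      omega
    have hbal := Bal (k - (j + 1)) (i0 + (j + 1)) (i + (j + 1))
    omega

/-- the lexicographically greatest factor has greatest weight (given balance) -/
lemma X1_max {s M : ℕ → Bool}
    (Bal : ∀ k i i', cnt (sh i s) k ≤ cnt (sh i' s) k + 1)
    (hMf : ∀ k, ∃ i, ∀ j < k, M j = s (i + j))
    (hMv : ∀ k i, val k (sh i s) ≤ val k M) :
    ∀ k i, cnt (sh i s) k ≤ cnt M k := by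
  intro k i
  by_contra hgt
  push_neg at hgt
  obtain ⟨i0, hi0⟩ := hMf k
  by_cases hag : ∀ j < k, M j = s (i + j)
  · have : cnt M k = cnt (sh i s) k := cnt_congr fun j hj => hag j hj
    omega
  · push_neg at hag
    obtain ⟨j, hjk, hjne, hagree⟩ := least_diff (x := M) (y := sh i s) hag
    have hc0 : cnt M j = cnt (sh i s) j := cnt_congr fun j' hj' => hagree j' hj'
    have hMj : M j = true ∧ s (i + j) = false := by
      cases hb : M j <;> cases hb' : s (i + j)
      · exact absurd (hb.trans (show (false : Bool) = sh i s j from hb'.symm)) hjne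
      · exfalso
        have hlt := val_lt_of_lexlt (x := M) (y := sh i s) hjk
          (fun j' hj' => hagree j' hj') hb hb'
        have := hMv k i
        omega
      · exact ⟨rfl, rfl⟩
      · exact absurd (hb.trans (show (true : Bool) = sh i s j from hb'.symm)) hjne
    have e1 : cnt M k = cnt M (j + 1) + cnt (sh (j + 1) M) (k - (j + 1)) := by
      rw [← cnt_split]
      congr 1
      omega
    have e2 : cnt (sh i s) k
        = cnt (sh i s) (j + 1) + cnt (sh (i + (j + 1)) s) (k - (j + 1)) :=
      split_cnt s k (j + 1) (k - (j + 1)) (by omega)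
    have e3 : cnt M (j + 1) = cnt M j + 1 := by
      rw [cnt_succ, hMj.1]
      simp
    have e4 : cnt (sh i s) (j + 1) = cnt (sh i s) j := by
      rw [cnt_succ]
      have : sh i s j = false := hMj.2
      rw [this]
      simp
    have e5 : cnt (sh (j + 1) M) (k - (j + 1)) = cnt (sh (i0 + (j + 1)) s) (k - (j + 1)) := by
      refine cnt_congr fun j' hj' => ?_
      show M (j + 1 + j') = s (i0 + (j + 1) + j')
      rw [hi0 (j + 1 + j') (by omega)]
      congr 1
      omega
    have hbal := Bal (k - (j + 1)) (i + (j + 1)) (i0 + (j + 1))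
    omega

/-- chain A : prefix weights are at most the weight of the min word, one longer -/
lemma chainA {s m : ℕ → Bool}
    (Bal : ∀ k i i', cnt (sh i s) k ≤ cnt (sh i' s) k + 1)
    (hmf : ∀ k, ∃ i, ∀ j < k, m j = s (i + j))
    (hlow : infLe (· < ·) (consInf false s) m) :
    ∀ n, cnt s n ≤ cnt m (n + 1) := by
  intro n
  have hx : ∀ t, cnt (consInf false s) (t + 1) = cnt s t := by
    intro t
    rw [cnt_cons_succ]
    simp
  rcases hlow with heq | ⟨j, hag, hlt⟩
  · rw [← heq, hx]
  · rw [bool_lt_iff] at hlt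
    by_contra hcon
    push_neg at hcon
    -- notation: x = consInf false s ; t' = n+1
    set x := consInf false s with hxdef
    have hagcnt : ∀ k', k' ≤ j → cnt x k' = cnt m k' :=
      fun k' h => cnt_congr fun j' hj' => hag j' (by omega)
    have hDj1 : cnt x (j + 1) + 1 = cnt m (j + 1) := by
      rw [cnt_succ, cnt_succ, hlt.1, hlt.2, hagcnt j le_rfl]
      simp
    set t' := n + 1 with ht'def
    have hxt' : cnt m t' + 1 ≤ cnt x t' := by
      rw [hx n]
      omega
    have hjt : j + 1 ≤ t' := by
      by_contra hc
      push_neg at hc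
      have := hagcnt t' (by omega)
      omega
    set P : ℕ → Prop := fun k' => cnt x k' + 1 ≤ cnt m k' with hPdef
    set k0 := Nat.findGreatest P t' with hk0def
    have hk0P : P k0 := Nat.findGreatest_spec hjt (by simp only [hPdef]; omega)
    have hk0lt : k0 < t' := by
      have hle := Nat.findGreatest_le (P := P) t'
      rcases lt_or_eq_of_le hle with h | h
      · exact h
      · exfalso
        have : P t' := by rw [← h]; exact hk0P
        simp only [hPdef] at this
        omega
    have hnot : ∀ k', k0 < k' → k' ≤ t' → ¬ P k' := by
      intro k' h1 h2
      exact Nat.findGreatest_is_greatest h1 h2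
    have hk0eq : cnt x k0 + 1 = cnt m k0 := by
      have h1 := hnot (k0 + 1) (by omega) (by omega)
      simp only [hPdef] at h1 hk0P
      push_neg at h1
      have e1 := cnt_succ x k0
      have e2 := cnt_succ m k0
      split at e1 <;> split at e2 <;> omega
    have hk01 : 1 ≤ k0 := by
      simp only [hPdef] at hk0P
      by_contra hc
      push_neg at hc
      interval_cases k0
      simp at hk0P
    -- tails
    have sx : cnt x t' = cnt x k0 + cnt (sh (k0 - 1) s) (t' - k0) := by
      have := cnt_split x k0 (t' - k0)
      rw [show k0 + (t' - k0) = t' by omega] at this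
      rw [this]
      congr 1
      have hsh : sh k0 x = sh (k0 - 1) s := by
        rw [hxdef, show k0 = (k0 - 1) + 1 by omega, sh_cons]
        norm_num
      rw [hsh]
    obtain ⟨i0, hi0⟩ := hmf t'
    have sm : cnt m t' = cnt m k0 + cnt (sh (i0 + k0) s) (t' - k0) := by
      have := cnt_split m k0 (t' - k0)
      rw [show k0 + (t' - k0) = t' by omega] at this
      rw [this]
      congr 1
      refine cnt_congr fun j' hj' => ?_
      show m (k0 + j') = s (i0 + k0 + j')
      rw [hi0 (k0 + j') (by omega)]
      congr 1
      omega
    have hbal := Bal (t' - k0) (k0 - 1) (i0 + k0)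
    omega

/-- chain B : the max word's weights are at most prefix weights plus one -/
lemma chainB {s M : ℕ → Bool}
    (Bal : ∀ k i i', cnt (sh i s) k ≤ cnt (sh i' s) k + 1)
    (hMf : ∀ k, ∃ i, ∀ j < k, M j = s (i + j))
    (hhigh : infLe (· < ·) M (consInf true s)) :
    ∀ n, cnt M (n + 1) ≤ cnt s n + 1 := by
  intro n
  have hy : ∀ t, cnt (consInf true s) (t + 1) = 1 + cnt s t := by
    intro t
    rw [cnt_cons_succ]
    simp
  rcases hhigh with heq | ⟨j, hag, hlt⟩
  · rw [heq, hy]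
    omega
  · rw [bool_lt_iff] at hlt
    by_contra hcon
    push_neg at hcon
    set y := consInf true s with hydef
    have hagcnt : ∀ k', k' ≤ j → cnt M k' = cnt y k' :=
      fun k' h => cnt_congr fun j' hj' => hag j' (by omega)
    have hDj1 : cnt M (j + 1) + 1 = cnt y (j + 1) := by
      rw [cnt_succ, cnt_succ, hlt.1, hlt.2, hagcnt j le_rfl]
      simp
    set t' := n + 1 with ht'def
    have hyt' : cnt y t' + 1 ≤ cnt M t' := by
      rw [hy n]
      omega
    have hjt : j + 1 ≤ t' := by
      by_contra hc
      push_neg at hc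
      have := hagcnt t' (by omega)
      omega
    set P : ℕ → Prop := fun k' => cnt M k' + 1 ≤ cnt y k' with hPdef
    set k0 := Nat.findGreatest P t' with hk0def
    have hk0P : P k0 := Nat.findGreatest_spec hjt (by simp only [hPdef]; omega)
    have hk0lt : k0 < t' := by
      have hle := Nat.findGreatest_le (P := P) t'
      rcases lt_or_eq_of_le hle with h | h
      · exact h
      · exfalso
        have : P t' := by rw [← h]; exact hk0P
        simp only [hPdef] at this
        omega
    have hnot : ∀ k', k0 < k' → k' ≤ t' → ¬ P k' := by
      intro k' h1 h2
      exact Nat.findGreatest_is_greatest h1 h2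
    have hk0eq : cnt M k0 + 1 = cnt y k0 := by
      have h1 := hnot (k0 + 1) (by omega) (by omega)
      simp only [hPdef] at h1 hk0P
      push_neg at h1
      have e1 := cnt_succ M k0
      have e2 := cnt_succ y k0
      split at e1 <;> split at e2 <;> omega
    have hk01 : 1 ≤ k0 := by
      simp only [hPdef] at hk0P
      by_contra hc
      push_neg at hc
      interval_cases k0
      simp at hk0P
    have sy : cnt y t' = cnt y k0 + cnt (sh (k0 - 1) s) (t' - k0) := by
      have := cnt_split y k0 (t' - k0)
      rw [show k0 + (t' - k0) = t' by omega] at this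
      rw [this]
      congr 1
      have hsh : sh k0 y = sh (k0 - 1) s := by
        rw [hydef, show k0 = (k0 - 1) + 1 by omega, sh_cons]
        norm_num
      rw [hsh]
    obtain ⟨i0, hi0⟩ := hMf t'
    have sM : cnt M t' = cnt M k0 + cnt (sh (i0 + k0) s) (t' - k0) := by
      have := cnt_split M k0 (t' - k0)
      rw [show k0 + (t' - k0) = t' by omega] at this
      rw [this]
      congr 1
      refine cnt_congr fun j' hj' => ?_
      show M (k0 + j') = s (i0 + k0 + j')
      rw [hi0 (k0 + j') (by omega)]
      congr 1
      omega
    have hbal := Bal (t' - k0) (i0 + k0) (k0 - 1)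
    omega

end StuAux

namespace StuAux

lemma tail_factor {s w : ℕ → Bool} (hwf : ∀ k, ∃ i, ∀ j < k, w j = s (i + j)) (a b : ℕ) :
    ∃ i, cnt (sh a w) b = cnt (sh i s) b := by
  obtain ⟨i0, hi0⟩ := hwf (a + b)
  refine ⟨i0 + a, cnt_congr fun j hj => ?_⟩
  show w (a + j) = s (i0 + a + j)
  rw [hi0 (a + j) (by omega)]
  congr 1
  omega

lemma block_bound {s w : ℕ → Bool} (hwf : ∀ k, ∃ i, ∀ j < k, w j = s (i + j))
    {L U b : ℕ} (hL : ∀ i, L ≤ cnt (sh i s) b) (hU : ∀ i, cnt (sh i s) b ≤ U) :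
    ∀ a c, cnt w (c + a * b) ≤ cnt w c + a * U ∧ cnt w c + a * L ≤ cnt w (c + a * b) := by
  intro a c
  induction a with
  | zero => simp
  | succ a ih =>
      have hsp : cnt w (c + (a + 1) * b) = cnt w (c + a * b) + cnt (sh (c + a * b) w) b := by
        rw [show c + (a + 1) * b = (c + a * b) + b by ring, cnt_split]
      obtain ⟨i, hi⟩ := tail_factor hwf (c + a * b) b
      constructor
      · rw [hsp]
        calc cnt w (c + a * b) + cnt (sh (c + a * b) w) b
            ≤ (cnt w c + a * U) + U := Nat.add_le_add ih.1 (by rw [hi]; exact hU i)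
          _ = cnt w c + (a + 1) * U := by ring
      · rw [hsp]
        calc cnt w c + (a + 1) * L = (cnt w c + a * L) + L := by ring
          _ ≤ cnt w (c + a * b) + cnt (sh (c + a * b) w) b :=
            Nat.add_le_add ih.2 (by rw [hi]; exact hL i)

lemma self_factor (s : ℕ → Bool) : ∀ k, ∃ i, ∀ j < k, s j = s (i + j) :=
  fun _ => ⟨0, fun j _ => by rw [Nat.zero_add]⟩

lemma sturmianFloor_of_cnt {α : ℝ} {s : ℕ → Bool} (h0 : 0 ≤ α) (h1 : α ≤ 1)
    (hc : ∀ n, (cnt s n : ℤ) = ⌊((n : ℝ) + 1) * α⌋ - ⌊α⌋) : SturmianFloor α α s := by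
  intro n
  have e1 := hc n
  have e2 := hc (n + 1)
  have hst := floor_steps h0 h1 (((n : ℝ) + 1) * α)
  have hr1 : ((n : ℝ) + 1) * α + α = (((n + 1 : ℕ) : ℝ) + 1) * α := by push_cast; ring
  have hr2 : (n : ℝ) * α + α = ((n : ℝ) + 1) * α := by ring
  rw [hr1, hr2]
  rw [hr1] at hst
  have e3 := cnt_succ s n
  cases hb : s n
  · rw [hb] at e3
    simp only [Bool.false_eq_true, if_false, Nat.add_zero] at e3
    have heq : ⌊(((n + 1 : ℕ) : ℝ) + 1) * α⌋ = ⌊((n : ℝ) + 1) * α⌋ := by omega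
    push_cast at heq
    simp [heq]
  · rw [hb] at e3
    simp only [if_true] at e3
    have hne : ⌊(((n + 1 : ℕ) : ℝ) + 1) * α⌋ ≠ ⌊((n : ℝ) + 1) * α⌋ := by omega
    push_cast at hne
    simp [hne]

lemma sturmianCeil_of_cnt {α : ℝ} {s : ℕ → Bool} (h0 : 0 ≤ α) (h1 : α ≤ 1)
    (hc : ∀ n, (cnt s n : ℤ) = ⌈((n : ℝ) + 1) * α⌉ - ⌈α⌉) : SturmianCeil α α s := by
  intro n
  have e1 := hc n
  have e2 := hc (n + 1)
  have hst := ceil_steps h0 h1 (((n : ℝ) + 1) * α)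
  have hr1 : ((n : ℝ) + 1) * α + α = (((n + 1 : ℕ) : ℝ) + 1) * α := by push_cast; ring
  have hr2 : (n : ℝ) * α + α = ((n : ℝ) + 1) * α := by ring
  rw [hr1, hr2]
  rw [hr1] at hst
  have e3 := cnt_succ s n
  cases hb : s n
  · rw [hb] at e3
    simp only [Bool.false_eq_true, if_false, Nat.add_zero] at e3
    have heq : ⌈(((n + 1 : ℕ) : ℝ) + 1) * α⌉ = ⌈((n : ℝ) + 1) * α⌉ := by omega
    push_cast at heq
    simp [heq]
  · rw [hb] at e3
    simp only [if_true] at e3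
    have hne : ⌈(((n + 1 : ℕ) : ℝ) + 1) * α⌉ ≠ ⌈((n : ℝ) + 1) * α⌉ := by omega
    push_cast at hne
    simp [hne]

end StuAux

namespace StuAux

lemma backward {s : ℕ → Bool}
    (hRHS : ∀ m M : ℕ → Bool, IsMinInf (· < ·) s m → IsMaxInf (· < ·) s M →
      infLe (· < ·) (consInf false s) m ∧ infLe (· < ·) m M ∧
        infLe (· < ·) M (consInf true s)) :
    IsStandardSturmian s := by
  obtain ⟨m, hmf, hmv⟩ := exists_min s
  obtain ⟨M, hMf, hMv⟩ := exists_max s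
  obtain ⟨hlow, -, hhigh⟩ := hRHS m M (isMinInf_of m hmf hmv) (isMaxInf_of M hMf hMv)
  have P1 : ∀ i k, val k (consInf false s) ≤ val k (sh i s) := fun i k =>
    le_trans (infLe_iff_val.mp hlow k) (hmv k i)
  have P2 : ∀ i k, val k (sh i s) ≤ val k (consInf true s) := fun i k =>
    le_trans (hMv k i) (infLe_iff_val.mp hhigh k)
  have Bal := bal_of_keys P1 P2
  have hW1 := W1_min Bal hmf hmv
  have hW2 : ∀ k i, cnt (sh i s) k ≤ cnt m k + 1 := by
    intro k i
    obtain ⟨i0, hi0⟩ := hmf k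
    have he : cnt m k = cnt (sh i0 s) k := cnt_congr fun j hj => hi0 j hj
    rw [he]
    exact Bal k i i0
  have hX1 := X1_max Bal hMf hMv
  have hX2 : ∀ k i, cnt M k ≤ cnt (sh i s) k + 1 := by
    intro k i
    obtain ⟨i0, hi0⟩ := hMf k
    have he : cnt M k = cnt (sh i0 s) k := cnt_congr fun j hj => hi0 j hj
    rw [he]
    exact Bal k i0 i
  have FA := chainA Bal hmf hlow
  have FB := chainB Bal hMf hhigh
  -- the slope
  set f : ℕ → ℝ := fun k => (cnt m k : ℝ) / k with hfdef
  have hfle : ∀ k, f k ≤ 1 := by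
    intro k
    rcases Nat.eq_zero_or_pos k with h | h
    · subst h; simp [hfdef]
    · simp only [hfdef]
      rw [div_le_one (by exact_mod_cast h)]
      exact_mod_cast cnt_le m k
  have hbdd : BddAbove (Set.range f) := by
    refine ⟨1, ?_⟩
    rintro x ⟨k, rfl⟩
    exact hfle k
  set α := ⨆ k, f k with hαdef
  have hα_ge : ∀ k, f k ≤ α := fun k => le_ciSup hbdd k
  have hα0 : 0 ≤ α := by
    have := hα_ge 0
    simpa [hfdef] using this
  have hα1 : α ≤ 1 := ciSup_le hfle
  have U1 : ∀ k : ℕ, (cnt m k : ℝ) ≤ k * α := by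
    intro k
    rcases Nat.eq_zero_or_pos k with h | h
    · subst h; simp
    · have hk : (0:ℝ) < k := by exact_mod_cast h
      have := hα_ge k
      simp only [hfdef] at this
      rw [div_le_iff₀ hk] at this
      linarith [this]
  have U2 : ∀ k : ℕ, (k : ℝ) * α ≤ cnt m k + 1 := by
    intro k
    rcases Nat.eq_zero_or_pos k with h | h
    · subst h
      have : ((0:ℕ):ℝ) * α = 0 := by simp
      rw [this]
      positivity
    · have hk : (0:ℝ) < k := by exact_mod_cast h
      have hsle : α ≤ ((cnt m k : ℝ) + 1) / k := by
        apply ciSup_le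
        intro j
        rcases Nat.eq_zero_or_pos j with hj | hj
        · subst hj
          have hf0 : f 0 = 0 := by simp [hfdef]
          rw [hf0]
          positivity
        · have hjr : (0:ℝ) < j := by exact_mod_cast hj
          simp only [hfdef]
          rw [div_le_div_iff₀ hjr hk]
          have h1 : k * cnt m j ≤ cnt m (k * j) := by
            have := (block_bound hmf (L := cnt m j) (U := cnt m j + 1)
              (fun i => hW1 j i) (fun i => hW2 j i) k 0).2
            simpa using this
          have h2 : cnt m (j * k) ≤ j * (cnt m k + 1) := by
            have := (block_bound hmf (L := cnt m k) (U := cnt m k + 1)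
              (fun i => hW1 k i) (fun i => hW2 k i) j 0).1
            simpa using this
          have h3 : cnt m j * k ≤ (cnt m k + 1) * j := by
            calc cnt m j * k = k * cnt m j := Nat.mul_comm _ _
              _ ≤ cnt m (k * j) := h1
              _ = cnt m (j * k) := by rw [Nat.mul_comm]
              _ ≤ j * (cnt m k + 1) := h2
              _ = (cnt m k + 1) * j := Nat.mul_comm _ _
          exact_mod_cast h3
      calc (k:ℝ) * α ≤ k * (((cnt m k : ℝ) + 1) / k) :=
            mul_le_mul_of_nonneg_left hsle (le_of_lt hk)
        _ = (cnt m k : ℝ) + 1 := by field_simp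
  have U3 : ∀ k : ℕ, (k : ℝ) * α ≤ cnt M k := by
    intro k
    by_contra hc
    push_neg at hc
    have hε : (0:ℝ) < (k:ℝ) * α - cnt M k := by linarith
    obtain ⟨j, hj⟩ := exists_nat_one_div_lt hε
    have h1 : (((j+1) * k : ℕ) : ℝ) * α ≤ cnt m ((j+1) * k) + 1 := U2 _
    have h2 : cnt m ((j+1) * k) ≤ cnt s ((j+1) * k) := by
      have := hW1 ((j+1) * k) 0
      rwa [sh_zero] at this
    have h3 : cnt s ((j+1) * k) ≤ (j+1) * cnt M k := by
      have := (block_bound (self_factor s) (L := 0) (U := cnt M k)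
        (fun _ => Nat.zero_le _) (fun i => hX1 k i) (j+1) 0).1
      simpa using this
    have h4 : ((j:ℝ)+1) * ((k:ℝ) * α) ≤ ((j:ℝ)+1) * (cnt M k) + 1 := by
      have hc2 : (cnt m ((j+1) * k) : ℝ) ≤ ((j:ℝ)+1) * (cnt M k) := by
        exact_mod_cast le_trans h2 h3
      push_cast at h1
      nlinarith [h1, hc2]
    have hj1 : (0:ℝ) < (j:ℝ) + 1 := by positivity
    have h5 : (k:ℝ) * α - cnt M k ≤ 1 / ((j:ℝ) + 1) := by
      rw [le_div_iff₀ hj1]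
      nlinarith [h4]
    linarith [hj, h5]
  -- sandwich
  have hS1 : ∀ n : ℕ, (cnt s n : ℝ) ≤ ((n:ℝ) + 1) * α := by
    intro n
    have h1 : (cnt s n : ℝ) ≤ cnt m (n+1) := by exact_mod_cast FA n
    have h2 := U1 (n+1)
    push_cast at h2
    linarith
  have hS2 : ∀ n : ℕ, ((n:ℝ) + 1) * α - 1 ≤ cnt s n := by
    intro n
    have h1 : (cnt M (n+1) : ℝ) ≤ cnt s n + 1 := by exact_mod_cast FB n
    have h2 := U3 (n+1)
    push_cast at h2
    linarith
  refine ⟨α, ⟨hα0, hα1⟩, ?_⟩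
  by_cases hone : α = 1
  · left
    apply sturmianFloor_of_cnt hα0 hα1
    intro n
    have h1 := hS2 n
    rw [hone] at h1
    have h2 : (n:ℝ) ≤ cnt s n := by linarith
    have h3 : cnt s n ≤ n := cnt_le s n
    have h4 : cnt s n = n := le_antisymm h3 (by exact_mod_cast h2)
    rw [hone, h4, fl_one n, Int.floor_one]
    omega
  by_cases hzero : α = 0
  · left
    apply sturmianFloor_of_cnt hα0 hα1
    intro n
    have h1 := hS1 n
    rw [hzero] at h1
    have h2 : cnt s n = 0 := by
      have h3 : (cnt s n : ℝ) ≤ 0 := by linarith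
      have h4 : cnt s n ≤ 0 := by exact_mod_cast h3
      omega
    rw [hzero, h2]
    norm_num
  have hposα : 0 < α := lt_of_le_of_ne hα0 (Ne.symm hzero)
  have hlt1 : α < 1 := lt_of_le_of_ne hα1 hone
  have hfl0 : ⌊α⌋ = 0 := Int.floor_eq_zero_iff.mpr ⟨hα0, hlt1⟩
  have hcl1 : ⌈α⌉ = 1 := by
    have hp := Int.ceil_pos.mpr hposα
    have hl : ⌈α⌉ ≤ 1 := Int.ceil_le.mpr (by norm_num [hα1])
    omega
  have hpin : ∀ n : ℕ, (¬ ∃ z : ℤ, ((n:ℝ) + 1) * α = (z:ℝ)) →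
      (cnt s n : ℤ) = ⌊((n:ℝ) + 1) * α⌋ := by
    intro n hni
    have h1 := hS1 n
    have h2 := hS2 n
    have hub : (cnt s n : ℤ) ≤ ⌊((n:ℝ) + 1) * α⌋ := Int.le_floor.mpr (by exact_mod_cast h1)
    have hne : ((⌊((n:ℝ) + 1) * α⌋ : ℤ) : ℝ) ≠ ((n:ℝ) + 1) * α := fun h => hni ⟨_, h.symm⟩
    have hflt : ((⌊((n:ℝ) + 1) * α⌋ : ℤ) : ℝ) < ((n:ℝ) + 1) * α :=
      lt_of_le_of_ne (Int.floor_le _) hne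
    have hlb : ⌊((n:ℝ) + 1) * α⌋ ≤ (cnt s n : ℤ) := by
      by_contra hcc
      push_neg at hcc
      have h6 : ((cnt s n : ℤ) : ℝ) + 1 ≤ ((⌊((n:ℝ) + 1) * α⌋ : ℤ) : ℝ) := by
        exact_mod_cast hcc
      push_cast at h6
      linarith
    omega
  have hceilfl : ∀ n : ℕ, (¬ ∃ z : ℤ, ((n:ℝ) + 1) * α = (z:ℝ)) →
      ⌈((n:ℝ)+1)*α⌉ = ⌊((n:ℝ)+1)*α⌋ + 1 := by
    intro n hx
    have h2 := Int.ceil_le_floor_add_one (((n:ℝ)+1)*α)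
    have hne : ((⌊((n:ℝ)+1)*α⌋ : ℤ):ℝ) ≠ ((n:ℝ)+1)*α := fun h => hx ⟨_, h.symm⟩
    have h3 : ((⌊((n:ℝ)+1)*α⌋ : ℤ):ℝ) < ((n:ℝ)+1)*α := lt_of_le_of_ne (Int.floor_le _) hne
    have h4 : (⌊((n:ℝ)+1)*α⌋ : ℤ) < ⌈((n:ℝ)+1)*α⌉ := by
      have h5 := Int.le_ceil (((n:ℝ)+1)*α)
      exact_mod_cast lt_of_lt_of_le h3 h5
    omega
  by_cases hQ : ∃ l : ℕ, 0 < l ∧ ∃ z : ℤ, (l : ℝ) * α = (z : ℝ)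
  · obtain ⟨hq0, z, hz⟩ := Nat.find_spec hQ
    set q := Nat.find hQ with hqdef
    have hdiv : ∀ l : ℕ, (∃ z' : ℤ, (l : ℝ) * α = (z' : ℝ)) → q ∣ l := by
      intro l hl
      obtain ⟨z', hz'⟩ := hl
      by_contra hnd
      have hr : l % q < q := Nat.mod_lt _ hq0
      have hrpos : 0 < l % q := Nat.pos_of_ne_zero fun h => hnd (Nat.dvd_of_mod_eq_zero h)
      refine Nat.find_min hQ hr ⟨hrpos, z' - ((l / q : ℕ) : ℤ) * z, ?_⟩
      have hl2 : (l : ℝ) = (q : ℝ) * ((l / q : ℕ) : ℝ) + ((l % q : ℕ) : ℝ) := by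
        exact_mod_cast (Nat.div_add_mod l q).symm
      have he : ((l % q : ℕ) : ℝ) * α = (l : ℝ) * α - ((l / q : ℕ) : ℝ) * ((q : ℝ) * α) := by
        rw [hl2]; ring
      rw [he, hz', hz, Int.cast_sub, Int.cast_mul, Int.cast_natCast]
    have hmulval : ∀ k : ℕ, ((q * k : ℕ) : ℝ) * α = (((k : ℤ) * z : ℤ) : ℝ) := by
      intro k
      push_cast
      rw [mul_comm (q:ℝ) (k:ℝ), mul_assoc, hz]
    have ha1 : (cnt m q : ℤ) ≤ z := by
      have h := U1 q
      rw [hz] at h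
      exact_mod_cast h
    have ha2 : z ≤ (cnt m q : ℤ) + 1 := by
      have h := U2 q
      rw [hz] at h
      exact_mod_cast h
    have ha3 : z ≤ (cnt M q : ℤ) := by
      have h := U3 q
      rw [hz] at h
      exact_mod_cast h
    have ha4 : cnt M q ≤ cnt m q + 1 := by
      obtain ⟨i0, hi0⟩ := hmf q
      have he : cnt m q = cnt (sh i0 s) q := cnt_congr fun j hj => hi0 j hj
      rw [he]
      exact hX2 q i0
    have hmult : ∀ n : ℕ, q ∣ (n + 1) → ∃ k : ℕ, 1 ≤ k ∧ n + 1 = q * k := by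
      intro n hdd
      obtain ⟨k, hk⟩ := hdd
      refine ⟨k, ?_, hk⟩
      cases k with
      | zero => omega
      | succ k => omega
    have hnint : ∀ n : ℕ, ¬ q ∣ (n + 1) → ¬ ∃ z' : ℤ, ((n:ℝ) + 1) * α = (z' : ℝ) := by
      intro n hnd hex2
      obtain ⟨z', hz'⟩ := hex2
      refine hnd (hdiv (n + 1) ⟨z', ?_⟩)
      push_cast
      exact hz'
    have hfval : ∀ n k : ℕ, n + 1 = q * k →
        ((n:ℝ) + 1) * α = (((k:ℤ) * z : ℤ) : ℝ) := by
      intro n k hk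
      have he : ((n:ℝ) + 1) = ((q * k : ℕ) : ℝ) := by exact_mod_cast hk
      rw [he, hmulval k]
    rcases (show (cnt m q : ℤ) = z - 1 ∨ (cnt m q : ℤ) = z by omega) with hA | hB
    · -- CASE A : ceiling word
      right
      apply sturmianCeil_of_cnt hα0 hα1
      intro n
      rw [hcl1]
      by_cases hd : q ∣ (n + 1)
      · obtain ⟨k, hk1, hk⟩ := hmult n hd
        obtain ⟨k', rfl⟩ : ∃ k', k = k' + 1 := ⟨k - 1, by omega⟩
        have hXq : (cnt M q : ℤ) = z := by omega
        have hb := (block_bound hmf (L := 0) (U := cnt M q)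
          (fun _ => Nat.zero_le _) (fun i => hX1 q i) k' q).1
        rw [show q + k' * q = q * (k' + 1) by ring, ← hk] at hb
        have hbz : (cnt m (n+1) : ℤ) ≤ (cnt m q : ℤ) + (k' : ℤ) * (cnt M q : ℤ) := by
          exact_mod_cast hb
        rw [hA, hXq] at hbz
        have hup : (cnt s n : ℤ) ≤ ((k' : ℤ) + 1) * z - 1 := by
          have h7 : (cnt s n : ℤ) ≤ (cnt m (n+1) : ℤ) := by exact_mod_cast FA n
          nlinarith [h7, hbz]
        have hflr := hfval n (k' + 1) hk
        have hlo : ((k' : ℤ) + 1) * z - 1 ≤ (cnt s n : ℤ) := by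
          have h2 := hS2 n
          rw [hflr] at h2
          have h8 : ((((k' : ℤ) + 1) * z : ℤ) : ℝ) - 1 ≤ ((cnt s n : ℤ) : ℝ) := by
            push_cast at h2 ⊢
            linarith
          exact_mod_cast h8
        have hceq : ⌈((n:ℝ) + 1) * α⌉ = ((k' : ℤ) + 1) * z := by
          rw [hflr]
          have : (((k' + 1 : ℕ) : ℤ) * z : ℤ) = ((k' : ℤ) + 1) * z := by push_cast; ring
          rw [this, Int.ceil_intCast]
        omega
      · have h1 := hpin n (hnint n hd)
        have h2 := hceilfl n (hnint n hd)
        omega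
    · rcases (show (cnt M q : ℤ) = z ∨ (cnt M q : ℤ) = z + 1 by omega) with hBX | hC
      · -- CASE B : periodic word
        have hwq : cnt M q = cnt m q := by omega
        have hall : ∀ i, cnt (sh i s) q = cnt m q :=
          fun i => le_antisymm (by rw [← hwq]; exact hX1 q i) (hW1 q i)
        have per : ∀ i, s (i + q) = s i := by
          intro i
          have e1 : cnt (sh i s) (q+1) = cnt (sh i s) q + (if s (i+q) then 1 else 0) :=
            tl_cnt s i q
          have e2 : cnt (sh i s) (q+1) = (if s i then 1 else 0) + cnt (sh (i+1) s) q :=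
            hd_cnt s i q
          rw [hall i] at e1
          rw [hall (i + 1)] at e2
          cases hb1 : s (i + q) <;> cases hb2 : s i
          · rfl
          · exfalso
            rw [hb1] at e1
            rw [hb2] at e2
            simp at e1 e2
            omega
          · exfalso
            rw [hb1] at e1
            rw [hb2] at e2
            simp at e1 e2
            omega
          · rfl
        have periter : ∀ i c : ℕ, s (i + c * q) = s i := by
          intro i c
          induction c with
          | zero => simp
          | succ c ih =>
              rw [show i + (c+1)*q = (i + c*q) + q by ring, per, ih]
        have hcnt_mult : ∀ k : ℕ, cnt s (q * k) = k * cnt m q := by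
          intro k
          induction k with
          | zero => simp
          | succ k ih =>
              rw [show q * (k+1) = q*k + q by ring, cnt_split, ih, hall]
              ring
        cases hlast : s (q - 1)
        · left
          apply sturmianFloor_of_cnt hα0 hα1
          intro n
          rw [hfl0]
          by_cases hd : q ∣ (n + 1)
          · obtain ⟨k, hk1, hk⟩ := hmult n hd
            obtain ⟨k', rfl⟩ : ∃ k', k = k' + 1 := ⟨k - 1, by omega⟩
            have hqk : q * (k' + 1) = k' * q + q := by ring
            have hn : n = (q - 1) + k' * q := by omega
            have hsn : s n = false := by rw [hn, periter]; exact hlast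
            have hcnt1 : cnt s (n + 1) = cnt s n := by
              have h9 := cnt_succ s n
              rw [hsn] at h9
              simpa using h9
            have h5 : cnt s (q * (k' + 1)) = (k' + 1) * cnt m q := hcnt_mult (k' + 1)
            rw [← hk, hcnt1] at h5
            have hv : (cnt s n : ℤ) = ((k' : ℤ) + 1) * z := by
              have h10 : (cnt s n : ℤ) = ((k' + 1 : ℕ) : ℤ) * (cnt m q : ℤ) := by
                exact_mod_cast h5
              rw [hB] at h10
              push_cast at h10 ⊢
              linarith
            have hflr := hfval n (k' + 1) hk
            rw [hv, hflr]
            have he2 : (((k' + 1 : ℕ) : ℤ) * z : ℤ) = ((k' : ℤ) + 1) * z := by push_cast; ring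
            rw [he2, Int.floor_intCast]
            omega
          · have h1 := hpin n (hnint n hd)
            omega
        · right
          apply sturmianCeil_of_cnt hα0 hα1
          intro n
          rw [hcl1]
          by_cases hd : q ∣ (n + 1)
          · obtain ⟨k, hk1, hk⟩ := hmult n hd
            obtain ⟨k', rfl⟩ : ∃ k', k = k' + 1 := ⟨k - 1, by omega⟩
            have hqk : q * (k' + 1) = k' * q + q := by ring
            have hn : n = (q - 1) + k' * q := by omega
            have hsn : s n = true := by rw [hn, periter]; exact hlast
            have hcnt1 : cnt s (n + 1) = cnt s n + 1 := by
              have h9 := cnt_succ s n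
              rw [hsn] at h9
              simpa using h9
            have h5 : cnt s (q * (k' + 1)) = (k' + 1) * cnt m q := hcnt_mult (k' + 1)
            rw [← hk, hcnt1] at h5
            have hv : (cnt s n : ℤ) = ((k' : ℤ) + 1) * z - 1 := by
              have h10 : (cnt s n : ℤ) + 1 = ((k' + 1 : ℕ) : ℤ) * (cnt m q : ℤ) := by
                exact_mod_cast h5
              rw [hB] at h10
              push_cast at h10 ⊢
              linarith
            have hflr := hfval n (k' + 1) hk
            rw [hv, hflr]
            have he2 : (((k' + 1 : ℕ) : ℤ) * z : ℤ) = ((k' : ℤ) + 1) * z := by push_cast; ring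
            rw [he2, Int.ceil_intCast]
          · have h1 := hpin n (hnint n hd)
            have h2 := hceilfl n (hnint n hd)
            omega
      · -- CASE C : floor word
        left
        apply sturmianFloor_of_cnt hα0 hα1
        intro n
        rw [hfl0]
        by_cases hd : q ∣ (n + 1)
        · obtain ⟨k, hk1, hk⟩ := hmult n hd
          obtain ⟨k', rfl⟩ : ∃ k', k = k' + 1 := ⟨k - 1, by omega⟩
          have hb := (block_bound hMf (L := cnt m q) (U := cnt m q + 1)
            (fun i => hW1 q i) (fun i => hW2 q i) k' q).2
          rw [show q + k' * q = q * (k' + 1) by ring, ← hk] at hb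
          have hbz : (cnt M q : ℤ) + (k' : ℤ) * (cnt m q : ℤ) ≤ (cnt M (n+1) : ℤ) := by
            exact_mod_cast hb
          rw [hC, hB] at hbz
          have hflr := hfval n (k' + 1) hk
          have hup : (cnt s n : ℤ) ≤ ((k' : ℤ) + 1) * z := by
            have h1 := hS1 n
            rw [hflr] at h1
            have h8 : ((cnt s n : ℤ) : ℝ) ≤ ((((k' : ℤ) + 1) * z : ℤ) : ℝ) := by
              push_cast at h1 ⊢
              linarith
            exact_mod_cast h8
          have hlo : ((k' : ℤ) + 1) * z ≤ (cnt s n : ℤ) := by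
            have h3 : (cnt M (n+1) : ℤ) ≤ (cnt s n : ℤ) + 1 := by exact_mod_cast FB n
            nlinarith [h3, hbz]
          have he2 : (((k' + 1 : ℕ) : ℤ) * z : ℤ) = ((k' : ℤ) + 1) * z := by push_cast; ring
          rw [hflr, he2, Int.floor_intCast]
          omega
        · have h1 := hpin n (hnint n hd)
          omega
  · left
    apply sturmianFloor_of_cnt hα0 hα1
    intro n
    rw [hfl0]
    have hni : ¬ ∃ z : ℤ, ((n:ℝ) + 1) * α = (z:ℝ) := by
      intro hex2
      obtain ⟨z, hzz⟩ := hex2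
      refine hQ ⟨n + 1, by omega, z, ?_⟩
      push_cast
      exact hzz
    have h1 := hpin n hni
    omega

end StuAux


/-- An infinite binary word `s` (with `a = false < b = true`) is standard
Sturmian iff `a·s ≤ min(s) ≤ max(s) ≤ b·s`. -/
theorem standard_sturmian_iff_lex (s : ℕ → Bool) :
    IsStandardSturmian s ↔
      ∀ m M : ℕ → Bool, IsMinInf (· < ·) s m → IsMaxInf (· < ·) s M →
        infLe (· < ·) (consInf false s) m ∧ infLe (· < ·) m M ∧
          infLe (· < ·) M (consInf true s) := by
  exact ⟨fun h => StuAux.forward h, fun h => StuAux.backward h⟩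
end
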